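/- arXiv:math/0312314 — 7 statements merged into one kernel-verified Lean document; each statement's English description precedes it below -/
import Mathlib

section
/- Let A_1 = (0,0), A_2 = (1,0), A_3 = (0,1) in ℝ², and for i = 1, 2, 3 let f_i : ℝ² → ℝ² be defined by f_i(x) = (x + A_i)/2, so that f_i is the contraction of the plane by factor 1/2 with fixed point A_i. Then there exists a unique nonempty compact set S ⊆ ℝ² (the Sierpinski triangle) such that S = f_1(S) ∪ f_2(S) ∪ f_3(S). -/
/-!
Hutchinson's theorem: for finitely many `K`-Lipschitz maps `fᵢ` with `K < 1` on a complete metric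
space, `S ↦ ⋃ i, fᵢ '' S` is a `K`-contraction of the nonempty compact sets in the Hausdorff
metric, which is complete, so Banach's fixed point theorem gives a unique invariant set. The three
maps of the Sierpinski triangle are `1/2`-Lipschitz.
-/

open Metric TopologicalSpace Function

variable {α β : Type*}

namespace Metric

variable [PseudoEMetricSpace α] [PseudoEMetricSpace β] {K : NNReal} {f : α → β} {s t : Set α}

theorem infEDist_image_le_of_lipschitzWith (hf : LipschitzWith K f) (ht : t.Nonempty) (x : α) :
    infEDist (f x) (f '' t) ≤ K * infEDist x t := by
  have : Nonempty t := ht.to_subtype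
  calc infEDist (f x) (f '' t) = ⨅ y : t, edist (f x) (f y) := by
        rw [infEDist, iInf_image, iInf_subtype']
    _ ≤ ⨅ y : t, K * edist x y := iInf_mono fun y => hf x y
    _ = K * infEDist x t := by
        rw [infEDist, iInf_subtype', ENNReal.mul_iInf (by simp)]

theorem hausdorffEDist_image_le_of_lipschitzWith (hf : LipschitzWith K f) (hs : s.Nonempty)
    (ht : t.Nonempty) : hausdorffEDist (f '' s) (f '' t) ≤ K * hausdorffEDist s t := by
  refine hausdorffEDist_le_of_infEDist ?_ ?_ <;> rintro _ ⟨x, hx, rfl⟩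
  · exact (infEDist_image_le_of_lipschitzWith hf ht x).trans
      (by gcongr; exact infEDist_le_hausdorffEDist_of_mem hx)
  · rw [hausdorffEDist_comm]
    exact (infEDist_image_le_of_lipschitzWith hf hs x).trans
      (by gcongr; exact infEDist_le_hausdorffEDist_of_mem hx)

end Metric

namespace TopologicalSpace.NonemptyCompacts

variable {ι : Type*} [Finite ι] [Nonempty ι]

def hutchinson [TopologicalSpace α] (f : ι → α → α) (hf : ∀ i, Continuous (f i))
    (S : NonemptyCompacts α) : NonemptyCompacts α where
  carrier := ⋃ i, f i '' S
  isCompact' := isCompact_iUnion fun i => S.isCompact.image (hf i)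
  nonempty' := Set.nonempty_iUnion.2 ⟨Classical.arbitrary ι, S.nonempty.image _⟩

theorem contractingWith_hutchinson [EMetricSpace α] {K : NNReal} (hK : K < 1) {f : ι → α → α}
    (hf : ∀ i, LipschitzWith K (f i)) :
    ContractingWith K (hutchinson f fun i => (hf i).continuous) :=
  ⟨hK, fun S T => (hausdorffEDist_iUnion_le).trans <| iSup_le fun i =>
    hausdorffEDist_image_le_of_lipschitzWith (hf i) S.nonempty T.nonempty⟩

end TopologicalSpace.NonemptyCompacts

open TopologicalSpace.NonemptyCompacts in
theorem exists_unique_nonempty_isCompact_eq_iUnion_image [MetricSpace α] [CompleteSpace α]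
    [Nonempty α] {ι : Type*} [Finite ι] [Nonempty ι] {K : NNReal} (hK : K < 1)
    {f : ι → α → α} (hf : ∀ i, LipschitzWith K (f i)) :
    ∃! S : Set α, S.Nonempty ∧ IsCompact S ∧ S = ⋃ i, f i '' S := by
  have hF := contractingWith_hutchinson hK hf
  set F := hutchinson f fun i => (hf i).continuous
  obtain ⟨S, hSfix, hSunique⟩ : ∃ S, IsFixedPt F S ∧ ∀ T, IsFixedPt F T → T = S :=
    ⟨_, hF.fixedPoint_isFixedPt, fun _ => hF.fixedPoint_unique⟩
  refine ⟨S, ⟨S.nonempty, S.isCompact, congrArg SetLike.coe hSfix.symm⟩, ?_⟩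
  rintro T ⟨hTne, hTc, hTeq⟩
  exact congrArg SetLike.coe (hSunique ⟨⟨T, hTc⟩, hTne⟩ (NonemptyCompacts.ext hTeq.symm))

theorem lipschitzWith_smul_add {𝕜 E : Type*} [NormedField 𝕜] [SeminormedAddCommGroup E]
    [NormedSpace 𝕜 E] (c : 𝕜) (a : E) : LipschitzWith ‖c‖₊ fun x => c • (x + a) := by
  simpa only [mul_one, Function.comp_def] using
    (lipschitzWith_smul c).comp (isometry_add_right a).lipschitz

/-- The Sierpinski triangle: with `A 1 = (0,0)`, `A 2 = (1,0)`, `A 3 = (0,1)` and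
`f i x = (x + A i) / 2` (the contraction by factor 1/2 with fixed point `A i`),
there is a unique nonempty compact set `S ⊆ ℝ²` with `S = f 1 '' S ∪ f 2 '' S ∪ f 3 '' S`. -/
theorem exists_unique_sierpinski_triangle :
    ∃! S : Set (ℝ × ℝ), S.Nonempty ∧ IsCompact S ∧
      S = ⋃ i : Fin 3,
        (fun x : ℝ × ℝ => ((1 : ℝ) / 2) • (x + ![((0 : ℝ), (0 : ℝ)), (1, 0), (0, 1)] i)) '' S := by
  have hK : ‖(1 : ℝ) / 2‖₊ < 1 := by
    rw [← NNReal.coe_lt_coe, coe_nnnorm]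
    norm_num
  exact exists_unique_nonempty_isCompact_eq_iUnion_image hK fun i => lipschitzWith_smul_add _ _
end

section
/- Let X be a complete metric space, let f_1, …, f_N : X → X be contraction maps (each Lipschitz with some constant < 1), and let K be the attractor, i.e. the unique nonempty compact set with K = f_1(K) ∪ … ∪ f_N(K). Let (I_k)_{k ≥ 0} be independent random variables on a probability space, each uniformly distributed on {1, …, N}. Fix x_0 ∈ K and define the random orbit x_{k+1} = f_{I_k}(x_k). Then with probability one the set {x_k : k ∈ ℕ} is dense in K, i.e. its closure equals K. -/
/-! The compositions `f_{w_m} ∘ ⋯ ∘ f_{w_1}` along words of length `m` are `ρ^m`-Lipschitz with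
`ρ = max rᵢ < 1`, and since `K = ⋃ fᵢ(K)` every `y ∈ K` is the image of a point of `K` along
some word of each length. So for every ball `B(y, ε)` some finite word maps all of `K` into it,
and the orbit, which never leaves `K`, enters `B(y, ε)` once the random sequence has read that
word. By the second Borel–Cantelli lemma, applied to the independent blocks `[jm, (j+1)m)`,
almost surely each of the countably many finite words is read at some time. -/

open MeasureTheory ProbabilityTheory NNReal ENNReal Set Filter Metric

namespace IFS

variable {X ι : Type*} (f : ι → X → X)

def applyWord : {m : ℕ} → (Fin m → ι) → X → X
  | 0, _ => id
  | _ + 1, w => applyWord (Fin.tail w) ∘ f (w 0)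

variable {f}

@[simp]
lemma applyWord_succ {m : ℕ} (w : Fin (m + 1) → ι) :
    applyWord f w = applyWord f (Fin.tail w) ∘ f (w 0) :=
  rfl

lemma lipschitzWith_applyWord [PseudoEMetricSpace X] {ρ : ℝ≥0}
    (hf : ∀ i, LipschitzWith ρ (f i)) {m : ℕ} (w : Fin m → ι) :
    LipschitzWith (ρ ^ m) (applyWord f w) := by
  induction m with
  | zero => exact LipschitzWith.id
  | succ m ih => rw [pow_succ, applyWord_succ]; exact (ih _).comp (hf _)

lemma exists_applyWord_eq {K : Set X} (hK : K ⊆ ⋃ i, f i '' K) (m : ℕ) {y : X} (hy : y ∈ K) :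
    ∃ w : Fin m → ι, ∃ z ∈ K, applyWord f w z = y := by
  induction m generalizing y with
  | zero => exact ⟨Fin.elim0, y, hy, rfl⟩
  | succ m ih =>
    obtain ⟨w, z, hz, rfl⟩ := ih hy
    obtain ⟨i, z', hz', rfl⟩ := mem_iUnion.1 (hK hz)
    exact ⟨Fin.cons i w, z', hz', by simp⟩

lemma orbit_add_eq_applyWord {x : ℕ → X} {i : ℕ → ι} (hx : ∀ k, x (k + 1) = f (i k) (x k))
    (n m : ℕ) :
    x (n + m) = applyWord f (fun t : Fin m => i (n + t)) (x n) := by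
  induction m generalizing n with
  | zero => rfl
  | succ m ih =>
    rw [← add_assoc, add_right_comm, ih, hx, applyWord_succ, Function.comp_apply]
    congr 2 with t
    simp [Fin.tail, add_assoc, add_comm 1]

lemma exists_mapsTo_ball [PseudoMetricSpace X] {K : Set X} (hK : K ⊆ ⋃ i, f i '' K)
    (hKb : Bornology.IsBounded K) {ρ : ℝ≥0} (hρ : ρ < 1) (hf : ∀ i, LipschitzWith ρ (f i))
    {y : X} (hy : y ∈ K) {ε : ℝ} (hε : 0 < ε) :
    ∃ m, ∃ w : Fin m → ι, MapsTo (applyWord f w) K (ball y ε) := by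
  have hlim : Tendsto (fun m => (ρ : ℝ) ^ m * diam K) atTop (nhds 0) := by
    simpa using (tendsto_pow_atTop_nhds_zero_of_lt_one ρ.coe_nonneg hρ).mul_const (diam K)
  obtain ⟨m, hm⟩ := (hlim.eventually (gt_mem_nhds hε)).exists
  obtain ⟨w, z, hz, rfl⟩ := exists_applyWord_eq hK m hy
  refine ⟨m, w, fun z' hz' => ?_⟩
  calc dist (applyWord f w z') (applyWord f w z) ≤ (ρ : ℝ) ^ m * dist z' z := by
        simpa using (lipschitzWith_applyWord hf w).dist_le_mul z' z
    _ ≤ (ρ : ℝ) ^ m * diam K := by gcongr; exact dist_le_diam_of_mem hKb hz' hz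
    _ < ε := hm

theorem closure_range_orbit_eq [PseudoMetricSpace X] {K : Set X} (hK : K = ⋃ i, f i '' K)
    (hKc : IsClosed K) (hKb : Bornology.IsBounded K) {ρ : ℝ≥0} (hρ : ρ < 1)
    (hf : ∀ i, LipschitzWith ρ (f i)) {x : ℕ → X} {i : ℕ → ι} (hx0 : x 0 ∈ K)
    (hx : ∀ k, x (k + 1) = f (i k) (x k))
    (hi : ∀ m (w : Fin m → ι), ∃ n, ∀ t : Fin m, i (n + t) = w t) :
    closure (range x) = K := by
  have hmaps : ∀ i, MapsTo (f i) K K := fun i =>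
    mapsTo_iff_image_subset.2 <| (subset_iUnion (fun i => f i '' K) i).trans hK.symm.subset
  have hxK : ∀ k, x k ∈ K := by
    intro k
    induction k with
    | zero => exact hx0
    | succ k ih => exact hx k ▸ hmaps _ ih
  refine (closure_minimal (range_subset_iff.2 hxK) hKc).antisymm fun y hy => ?_
  refine Metric.mem_closure_iff.2 fun ε hε => ?_
  obtain ⟨m, w, hw⟩ := exists_mapsTo_ball hK.subset hKb hρ hf hy hε
  obtain ⟨n, hn⟩ := hi m w
  refine ⟨x (n + m), mem_range_self _, ?_⟩
  rw [dist_comm, orbit_add_eq_applyWord hx, funext hn]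
  exact hw (hxK n)

end IFS

namespace ProbabilityTheory

variable {Ω β : Type*} [MeasurableSpace Ω] [MeasurableSpace β] {P : Measure Ω}

lemma iIndepFun.iIndepSet_iInter_preimage {κ ι : Type*} [Fintype ι] {Y : κ × ι → Ω → β}
    (hY : ∀ p, Measurable (Y p)) (h : iIndepFun Y P) {B : κ × ι → Set β}
    (hB : ∀ p, MeasurableSet (B p)) :
    iIndepSet (fun j => ⋂ t, Y (j, t) ⁻¹' B (j, t)) P := by
  classical
  have hprod : ∀ S : Finset κ, P (⋂ j ∈ S, ⋂ t, Y (j, t) ⁻¹' B (j, t)) =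
      ∏ j ∈ S, ∏ t, P (Y (j, t) ⁻¹' B (j, t)) := by
    intro S
    rw [← Finset.prod_product', ← h.meas_biInter fun p _ => ⟨B p, hB p, rfl⟩]
    congr 1
    ext ω
    simp only [mem_iInter, mem_preimage, Finset.mem_product, Finset.mem_univ, and_true]
    exact ⟨fun hω p hp => hω p.1 hp p.2, fun hω j hj t => hω (j, t) hj⟩
  rw [iIndepSet_iff_meas_biInter fun j => MeasurableSet.iInter fun t => hY _ (hB _)]
  intro S
  rw [hprod]
  refine Finset.prod_congr rfl fun j _ => ?_
  simpa using (hprod {j}).symm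

theorem iIndepFun.ae_exists_forall_eq [MeasurableSingletonClass β] [IsProbabilityMeasure P]
    {I : ℕ → Ω → β} (hI : ∀ k, Measurable (I k)) (h : iIndepFun I P) {c : ℝ≥0∞} (hc : c ≠ 0)
    (hIc : ∀ k b, c ≤ P (I k ⁻¹' {b})) {m : ℕ} (w : Fin m → β) :
    ∀ᵐ ω ∂P, ∃ n, ∀ t : Fin m, I (n + t) ω = w t := by
  have hinj : (fun p : ℕ × Fin m => p.1 * m + p.2).Injective := by
    rintro ⟨j, t⟩ ⟨j', t'⟩ hjt
    have hdiv := congrArg (· / m) hjt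
    have hmod := congrArg (· % m) hjt
    simp only [Nat.add_comm _ (t : ℕ), Nat.add_comm _ (t' : ℕ), Nat.add_mul_div_right _ _ t.pos,
      Nat.div_eq_of_lt t.isLt, Nat.div_eq_of_lt t'.isLt, Nat.add_mul_mod_self_right,
      Nat.mod_eq_of_lt t.isLt, Nat.mod_eq_of_lt t'.isLt] at hdiv hmod
    simp_all [Fin.ext_iff]
  let A : ℕ → Set Ω := fun j => ⋂ t : Fin m, I (j * m + t) ⁻¹' {w t}
  have hA : iIndepSet A P := (h.precomp hinj).iIndepSet_iInter_preimage (fun _ => hI _)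
    (B := fun p => {w p.2}) fun _ => measurableSet_singleton _
  have hAm : ∀ j, MeasurableSet (A j) := fun j =>
    MeasurableSet.iInter fun t => hI _ (measurableSet_singleton _)
  have hPA : ∀ j, c ^ m ≤ P (A j) := by
    intro j
    have hblock := (h.precomp ((add_right_injective (j * m)).comp Fin.val_injective)).meas_iInter
      fun t => ⟨{w t}, measurableSet_singleton _, rfl⟩
    rw [show P (A j) = _ from hblock]
    simpa using Finset.pow_card_le_prod (Finset.univ : Finset (Fin m)) _ _
      fun t _ => hIc (j * m + t) (w t)
  have hsum : ∑' j, P (A j) = ∞ :=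
    top_le_iff.1 <| (ENNReal.tsum_const_eq_top_of_ne_zero (pow_ne_zero m hc)).symm.trans_le
      (ENNReal.tsum_le_tsum hPA)
  have hlimsup : limsup A atTop ∈ ae P :=
    (mem_ae_iff_prob_eq_one (.measurableSet_limsup hAm)).2 (measure_limsup_eq_one hAm hA hsum)
  filter_upwards [hlimsup] with ω hω
  obtain ⟨j, hj⟩ := (mem_limsup_iff_frequently_mem.1 hω).exists
  exact ⟨j * m, fun t => mem_iInter.1 hj t⟩

end ProbabilityTheory

theorem chaos_game_orbit_dense_in_attractor_general
    {X : Type*} [MetricSpace X]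
    {N : ℕ} (f : Fin N → X → X) (r : Fin N → ℝ≥0)
    (hr : ∀ i, r i < 1) (hf : ∀ i, LipschitzWith (r i) (f i))
    (K : Set X) (hKc : IsCompact K)
    (hK : K = ⋃ i, f i '' K)
    {Ω : Type*} [MeasurableSpace Ω] (P : Measure Ω) [IsProbabilityMeasure P]
    (I : ℕ → Ω → Fin N) (hmeas : ∀ k, Measurable (I k))
    (hindep : iIndepFun I P)
    (hunif : ∀ k i, P {ω | I k ω = i} = (N : ℝ≥0∞)⁻¹)
    (x₀ : X) (hx₀ : x₀ ∈ K)
    (x : ℕ → Ω → X) (hx0 : ∀ ω, x 0 ω = x₀)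
    (hx : ∀ k ω, x (k + 1) ω = f (I k ω) (x k ω)) :
    ∀ᵐ ω ∂P, closure (Set.range fun k => x k ω) = K := by
  obtain ⟨ρ, hρ, hfρ⟩ : ∃ ρ : ℝ≥0, ρ < 1 ∧ ∀ i, LipschitzWith ρ (f i) :=
    ⟨Finset.univ.sup r, (Finset.sup_lt_iff zero_lt_one).2 fun i _ => hr i,
      fun i => (hf i).weaken (Finset.le_sup (Finset.mem_univ i))⟩
  have hwords : ∀ᵐ ω ∂P, ∀ m (w : Fin m → Fin N), ∃ n, ∀ t : Fin m, I (n + t) ω = w t :=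
    ae_all_iff.2 fun m => ae_all_iff.2 fun w =>
      hindep.ae_exists_forall_eq hmeas (ENNReal.inv_ne_zero.2 (natCast_ne_top N))
        (fun k b => (hunif k b).ge) w
  filter_upwards [hwords] with ω hω
  exact IFS.closure_range_orbit_eq hK hKc.isClosed hKc.isBounded hρ hfρ (hx0 ω ▸ hx₀)
    (fun k => hx k ω) hω

/-- Chaos game with uniform random choices: starting at a point `x₀` of the attractor `K`
of an IFS of contractions and applying at each step a map chosen independently and
uniformly at random, with probability one the orbit is dense in `K`. -/
theorem chaos_game_orbit_dense_in_attractor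
    {X : Type*} [MetricSpace X] [CompleteSpace X]
    {N : ℕ} (hN : 1 ≤ N) (f : Fin N → X → X) (r : Fin N → ℝ≥0)
    (hr : ∀ i, r i < 1) (hf : ∀ i, LipschitzWith (r i) (f i))
    (K : Set X) (hKne : K.Nonempty) (hKc : IsCompact K)
    (hK : K = ⋃ i, f i '' K)
    {Ω : Type*} [MeasurableSpace Ω] (P : Measure Ω) [IsProbabilityMeasure P]
    (I : ℕ → Ω → Fin N) (hmeas : ∀ k, Measurable (I k))
    (hindep : iIndepFun I P)
    (hunif : ∀ k i, P {ω | I k ω = i} = (N : ℝ≥0∞)⁻¹)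
    (x₀ : X) (hx₀ : x₀ ∈ K)
    (x : ℕ → Ω → X) (hx0 : ∀ ω, x 0 ω = x₀)
    (hx : ∀ k ω, x (k + 1) ω = f (I k ω) (x k ω)) :
    ∀ᵐ ω ∂P, closure (Set.range fun k => x k ω) = K :=
  chaos_game_orbit_dense_in_attractor_general f r hr hf K hKc hK P I hmeas hindep hunif x₀ hx₀ x hx0
    hx
end

section
/- Let X be a nonempty compact metric space, let f_1, …, f_N : X → X be continuous contraction maps (each Lipschitz with some constant < 1), and let p_1, …, p_N be positive reals with p_1 + … + p_N = 1. Then there exists a unique Borel probability measure μ on X satisfying μ = p_1 · (f_1)_# μ + … + p_N · (f_N)_# μ, where (f_i)_# μ denotes the pushforward of μ under f_i. -/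
open MeasureTheory NNReal Set

private lemma measurable_apply_countable {α β γ : Type*} [MeasurableSpace α] [MeasurableSpace γ]
    [MeasurableSpace β] [Countable β] [MeasurableSingletonClass β] {F : β → α → γ} (hF : ∀ i, Measurable (F i))
    {d : α → β} (hd : Measurable d) : Measurable fun t => F (d t) t :=
  have h : Measurable fun x : α × β => F x.2 x.1 :=
    measurable_from_prod_countable_left (f := fun x : α × β => F x.2 x.1) fun i => hF i
  h.comp (measurable_id.prodMk hd)

private lemma attractor_exists
    {X : Type*} [MetricSpace X] [CompactSpace X] [Nonempty X]
    [MeasurableSpace X] [BorelSpace X]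
    {N : ℕ} (hN : 1 ≤ N) (f : Fin N → X → X) (r : Fin N → ℝ≥0)
    (hr : ∀ i, r i < 1) (hf : ∀ i, LipschitzWith (r i) (f i))
    (p : Fin N → ℝ) (hp : ∀ i, 0 < p i) (hpsum : ∑ i, p i = 1) :
    ∃ μ : Measure X, IsProbabilityMeasure μ ∧
      μ = ∑ i, ENNReal.ofReal (p i) • μ.map (f i) := by
  classical
  obtain ⟨x0⟩ : Nonempty X := inferInstance
  have hN0 : 0 < N := hN
  have hfc : ∀ i, Continuous (f i) := fun i => (hf i).continuous
  have hfm : ∀ i, Measurable (f i) := fun i => (hfc i).measurable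
  -- partial sums of weights
  set q : ℕ → ℝ := fun n => if h : n < N then p ⟨n, h⟩ else 0 with hqdef
  set s : ℕ → ℝ := fun n => ∑ j ∈ Finset.range n, q j with hsdef
  have hq0 : ∀ n, 0 ≤ q n := by
    intro n; by_cases h : n < N <;> simp [hqdef, h, (hp _).le]
  have hqpos : ∀ n, n < N → 0 < q n := by
    intro n h; simp [hqdef, h, hp]
  have hssucc : ∀ n, s (n + 1) = s n + q n := by
    intro n; simp [hsdef, Finset.sum_range_succ]
  have hsmono : Monotone s := monotone_nat_of_le_succ fun n => by
    rw [hssucc]; linarith [hq0 n]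
  have hs0 : s 0 = 0 := by simp [hsdef]
  have hs_eq : ∀ n, s n = ∑ j ∈ Finset.range n, q j := fun n => rfl
  have hsN : s N = 1 := by
    rw [hs_eq, ← Fin.sum_univ_eq_sum_range, ← hpsum]
    refine Finset.sum_congr rfl fun i _ => ?_
    have : q ↑i = if h : (i:ℕ) < N then p ⟨i, h⟩ else 0 := rfl
    simp [this, i.isLt]
  -- the digit function
  set cnt : ℝ → ℕ := fun t => ((Finset.range N).filter fun n => s n ≤ t).card with hcntdef
  set dg : ℝ → ℕ := fun t => cnt t - 1 with hdgdef
  have hcnt_meas : Measurable cnt := by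
    have : cnt = fun t => ∑ n ∈ Finset.range N, if s n ≤ t then 1 else 0 := by
      funext t
      have h0 : cnt t = ((Finset.range N).filter fun n => s n ≤ t).card := rfl
      rw [h0, Finset.card_filter]
    rw [this]
    exact Finset.measurable_sum _ fun n _ =>
      Measurable.ite (measurableSet_le measurable_const measurable_id) measurable_const
        measurable_const
  have hdg_meas : Measurable dg := (measurable_from_nat (f := fun n => n - 1)).comp hcnt_meas
  have hdg_def : ∀ t, dg t = cnt t - 1 := fun _ => rfl
  have hdg_lt : ∀ t, dg t < N := by
    intro t
    have h1 : cnt t ≤ N := le_trans (Finset.card_filter_le _ _) (by simp)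
    have h2 := hdg_def t
    omega
  -- on the interval `[s i, s (i+1))` the digit is `i`
  have hcnt_eq : ∀ i, i < N → ∀ t, t ∈ Ico (s i) (s (i + 1)) → cnt t = i + 1 := by
    intro i hi t ht
    have h0 : cnt t = ((Finset.range N).filter fun n => s n ≤ t).card := rfl
    rw [h0]
    have : ((Finset.range N).filter fun n => s n ≤ t) = Finset.range (i + 1) := by
      ext n
      simp only [Finset.mem_filter, Finset.mem_range]
      constructor
      · rintro ⟨hn, hsn⟩
        by_contra hcon
        have h2 : i + 1 ≤ n := by omega
        exact absurd (le_trans (hsmono h2) hsn) (not_le.2 ht.2)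
      · intro hn
        exact ⟨by omega, le_trans (hsmono (by omega : n ≤ i)) ht.1⟩
    rw [this, Finset.card_range]
  have hdg_eq : ∀ i, i < N → ∀ t, t ∈ Ico (s i) (s (i + 1)) → dg t = i := by
    intro i hi t ht; rw [hdg_def, hcnt_eq i hi t ht]; omega
  -- Fin-valued digit
  set digit : ℝ → Fin N := fun t => ⟨dg t, hdg_lt t⟩ with hdigitdef
  have hdigit_meas : Measurable digit := by
    have : digit = (fun n : ℕ => if h : n < N then (⟨n, h⟩ : Fin N) else ⟨0, hN0⟩) ∘ dg := by
      funext t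
      show (⟨dg t, hdg_lt t⟩ : Fin N) = _
      simp [Function.comp_def, dif_pos (hdg_lt t)]
    rw [this]
    exact measurable_from_nat.comp hdg_meas
  -- the shift map
  set S : ℝ → ℝ := fun t => (t - s (dg t)) * (q (dg t))⁻¹ with hSdef
  have hS_meas : Measurable S := by
    refine measurable_apply_countable (F := fun n (t : ℝ) => (t - s n) * (q n)⁻¹)
      (fun n => (measurable_id.sub measurable_const).mul measurable_const) hdg_meas
  -- iterative coding maps
  set G : ℕ → ℝ → X := fun n => Nat.rec (fun _ => x0) (fun _ ih t => f (digit t) (ih (S t))) n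
    with hGdef
  have hG0 : ∀ t, G 0 t = x0 := fun _ => rfl
  have hGsucc : ∀ n t, G (n + 1) t = f (digit t) (G n (S t)) := fun _ _ => rfl
  have hG_meas : ∀ n, Measurable (G n) := by
    intro n
    induction n with
    | zero => exact measurable_const
    | succ n ih =>
      refine measurable_apply_countable (F := fun i t => f i (G n (S t)))
        (fun i => (hfm i).comp (ih.comp hS_meas)) hdigit_meas
  -- contraction constant and diameter bound
  set Cr : ℝ := ((Finset.univ.sup r : ℝ≥0) : ℝ) with hCrdef
  have hCr0 : 0 ≤ Cr := (Finset.univ.sup r).2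
  have hCr1 : Cr < 1 := by
    have h1 : Finset.univ.sup r < 1 := Finset.sup_lt_iff (by norm_num) |>.2 fun i _ => hr i
    exact_mod_cast h1
  have hcontr : ∀ (i : Fin N) (x y : X), dist (f i x) (f i y) ≤ Cr * dist x y := by
    intro i x y
    refine le_trans ((hf i).dist_le_mul x y) ?_
    have h0 : r i ≤ Finset.univ.sup r := Finset.le_sup (Finset.mem_univ i)
    have : (r i : ℝ) ≤ Cr := by exact_mod_cast h0
    exact mul_le_mul_of_nonneg_right this dist_nonneg
  obtain ⟨D, hD⟩ := Metric.isBounded_iff.1 (isCompact_univ (X := X)).isBounded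
  have hD' : ∀ x y : X, dist x y ≤ max D 0 := fun x y =>
    le_trans (hD (mem_univ x) (mem_univ y)) (le_max_left _ _)
  -- Cauchy estimate
  have hstepG : ∀ n t, dist (G n t) (G (n + 1) t) ≤ max D 0 * Cr ^ n := by
    intro n
    induction n with
    | zero =>
      intro t
      rw [pow_zero, mul_one]
      exact hD' _ _
    | succ n ih =>
      intro t
      simp only [hGsucc]
      calc dist (f (digit t) (G n (S t))) (f (digit t) (G (n + 1) (S t)))
          ≤ Cr * dist (G n (S t)) (G (n + 1) (S t)) := hcontr _ _ _
        _ ≤ Cr * (max D 0 * Cr ^ n) := mul_le_mul_of_nonneg_left (ih (S t)) hCr0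
        _ = max D 0 * Cr ^ (n + 1) := by ring
  have hcauchy : ∀ t, CauchySeq fun n => G n t := fun t =>
    cauchySeq_of_le_geometric Cr (max D 0) hCr1 fun n => hstepG n t
  -- the coding map
  have hglim : ∀ t : ℝ, ∃ x : X, Filter.Tendsto (fun n => G n t) Filter.atTop (nhds x) :=
    fun t => cauchySeq_tendsto_of_complete (hcauchy t)
  set g : ℝ → X := fun t => (hglim t).choose with hgdef
  have hgtendsto : ∀ t, Filter.Tendsto (fun n => G n t) Filter.atTop (nhds (g t)) :=
    fun t => (hglim t).choose_spec
  have hg_meas : Measurable g :=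
    measurable_of_tendsto_metrizable hG_meas (tendsto_pi_nhds.2 hgtendsto)
  have hgrec : ∀ t, g t = f (digit t) (g (S t)) := by
    intro t
    have h1 : Filter.Tendsto (fun n => G (n + 1) t) Filter.atTop (nhds (g t)) :=
      (hgtendsto t).comp (Filter.tendsto_add_atTop_nat 1)
    have h2 : Filter.Tendsto (fun n => G (n + 1) t) Filter.atTop
        (nhds (f (digit t) (g (S t)))) := by
      simp only [hGsucc]
      exact ((hfc (digit t)).continuousAt.tendsto).comp (hgtendsto (S t))
    exact tendsto_nhds_unique h1 h2
  -- the candidate measure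
  set ν : Measure ℝ := volume.restrict (Ico (0:ℝ) 1) with hνdef
  have hνprob : IsProbabilityMeasure ν := by
    constructor
    rw [hνdef, Measure.restrict_apply_univ, Real.volume_Ico]
    norm_num
  refine ⟨ν.map g, Measure.isProbabilityMeasure_map hg_meas.aemeasurable, ?_⟩
  refine Measure.ext fun A hA => ?_
  -- disjointness of the intervals
  have hdisj2 : ∀ i j : ℕ, i < j → Disjoint (Ico (s i) (s (i + 1))) (Ico (s j) (s (j + 1))) := by
    intro i j hij
    rw [Set.Ico_disjoint_Ico]
    exact le_trans (min_le_left _ _) (le_trans (hsmono hij) (le_max_right _ _))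
  -- the union decomposition
  have hUnion : g ⁻¹' A ∩ Ico (0:ℝ) 1
      = ⋃ i ∈ Finset.range N, (g ⁻¹' A ∩ Ico (s i) (s (i + 1))) := by
    ext t
    simp only [mem_inter_iff, mem_iUnion, Finset.mem_range, mem_Ico, mem_preimage,
      exists_prop]
    constructor
    · rintro ⟨hgA, h0, h1⟩
      have hex : ∃ n, t < s n := ⟨N, by rw [hsN]; exact h1⟩
      have hm : t < s (Nat.find hex) := Nat.find_spec hex
      have hm0 : Nat.find hex ≠ 0 := by
        intro h
        rw [h, hs0] at hm
        linarith
      have hmN : Nat.find hex ≤ N := Nat.find_le (by rw [hsN]; exact h1)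
      have hprev : ¬ t < s (Nat.find hex - 1) := Nat.find_min hex (by omega)
      refine ⟨Nat.find hex - 1, by omega, hgA, not_lt.1 hprev, ?_⟩
      have h2 : Nat.find hex - 1 + 1 = Nat.find hex := by omega
      rw [h2]
      exact hm
    · rintro ⟨i, hiN, hgA, hsi, hsi1⟩
      refine ⟨hgA, le_trans (by rw [← hs0]; exact hsmono (Nat.zero_le i)) hsi,
        lt_of_lt_of_le hsi1 (by rw [← hsN]; exact hsmono (by omega))⟩
  -- compute the left-hand side
  rw [Measure.map_apply hg_meas hA, hνdef, Measure.restrict_apply (hg_meas hA), hUnion,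
    measure_biUnion_finset
      (fun i _ j _ hij => by
        rcases Nat.lt_or_ge i j with h | h
        · exact (hdisj2 i j h).mono inter_subset_right inter_subset_right
        · exact ((hdisj2 j i (by omega)).mono inter_subset_right inter_subset_right).symm)
      (fun b _ => (hg_meas hA).inter measurableSet_Ico),
    ← Fin.sum_univ_eq_sum_range (fun n => volume (g ⁻¹' A ∩ Ico (s n) (s (n + 1)))) N,
    Measure.finset_sum_apply]
  refine Finset.sum_congr rfl fun i _ => ?_
  -- per-index computation
  have hqi : 0 < q ↑i := hqpos _ i.isLt
  have hqip : q ↑i = p i := by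
    have : q ↑i = if h : (i:ℕ) < N then p ⟨i, h⟩ else 0 := rfl
    simp [this, i.isLt]
  have hB : MeasurableSet (g ⁻¹' (f i ⁻¹' A)) := hg_meas (hfm i hA)
  -- the key set identity
  have hI_eq : g ⁻¹' A ∩ Ico (s ↑i) (s (↑i + 1))
      = (fun t => (t - s ↑i) * (q ↑i)⁻¹) ⁻¹' (g ⁻¹' (f i ⁻¹' A) ∩ Ico (0:ℝ) 1) := by
    ext t
    have hiff : t ∈ Ico (s ↑i) (s (↑i + 1)) ↔ (t - s ↑i) * (q ↑i)⁻¹ ∈ Ico (0:ℝ) 1 := by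
      rw [mem_Ico, mem_Ico, hssucc, ← div_eq_mul_inv]
      constructor
      · rintro ⟨h1, h2⟩
        exact ⟨div_nonneg (by linarith) hqi.le, (div_lt_one hqi).2 (by linarith)⟩
      · rintro ⟨h1, h2⟩
        have h3 := (div_lt_one hqi).1 h2
        have h4 := div_nonneg_iff.1 h1
        constructor
        · rcases h4 with ⟨h5, _⟩ | ⟨_, h6⟩
          · linarith
          · linarith
        · linarith
    have hval : t ∈ Ico (s ↑i) (s (↑i + 1)) → g t = f i (g ((t - s ↑i) * (q ↑i)⁻¹)) := by
      intro ht
      have hdgt : dg t = ↑i := hdg_eq ↑i i.isLt t ht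
      have hdig : digit t = i := by
        have : digit t = ⟨dg t, hdg_lt t⟩ := rfl
        rw [this]
        exact Fin.ext hdgt
      have hSt : S t = (t - s ↑i) * (q ↑i)⁻¹ := by
        have : S t = (t - s (dg t)) * (q (dg t))⁻¹ := rfl
        rw [this, hdgt]
      rw [hgrec t, hdig, hSt]
    simp only [mem_inter_iff, mem_preimage]
    constructor
    · rintro ⟨hgA, ht⟩
      exact ⟨by rw [← hval ht]; exact hgA, hiff.1 ht⟩
    · rintro ⟨hgA, ht⟩
      have ht' := hiff.2 ht
      exact ⟨by rw [hval ht']; exact hgA, ht'⟩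
  rw [hI_eq]
  -- compute the preimage volume under the affine map
  have hcomp : (fun t => (t - s ↑i) * (q ↑i)⁻¹) ⁻¹' (g ⁻¹' (f i ⁻¹' A) ∩ Ico (0:ℝ) 1)
      = (fun t => t + -(s ↑i)) ⁻¹'
        ((fun u => u * (q ↑i)⁻¹) ⁻¹' (g ⁻¹' (f i ⁻¹' A) ∩ Ico (0:ℝ) 1)) := by
    ext t; simp [sub_eq_add_neg]
  rw [hcomp, measure_preimage_add_right,
    Real.volume_preimage_mul_right (inv_ne_zero hqi.ne'),
    Measure.smul_apply, Measure.map_apply (hfm i) hA, Measure.map_apply hg_meas (hfm i hA),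
    Measure.restrict_apply hB, inv_inv, abs_of_pos hqi, hqip, smul_eq_mul]

private lemma attractor_unique
    {X : Type*} [MetricSpace X] [CompactSpace X] [Nonempty X]
    [MeasurableSpace X] [BorelSpace X]
    {N : ℕ} (f : Fin N → X → X) (r : Fin N → ℝ≥0)
    (hr : ∀ i, r i < 1) (hf : ∀ i, LipschitzWith (r i) (f i))
    (p : Fin N → ℝ) (hp : ∀ i, 0 < p i) (hpsum : ∑ i, p i = 1)
    (μ ν : Measure X) (hμp : IsProbabilityMeasure μ) (hνp : IsProbabilityMeasure ν)
    (hμ : μ = ∑ i, ENNReal.ofReal (p i) • μ.map (f i))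
    (hν : ν = ∑ i, ENNReal.ofReal (p i) • ν.map (f i)) : μ = ν := by
  classical
  have hfc : ∀ i, Continuous (f i) := fun i => (hf i).continuous
  have hfm : ∀ i, Measurable (f i) := fun i => (hfc i).measurable
  -- integrability of continuous functions
  have hInt : ∀ (g : X → ℝ), Continuous g → ∀ (m : Measure X), IsFiniteMeasure m →
      Integrable g m := by
    intro g hg m hm
    exact hg.integrable_of_hasCompactSupport
      (IsCompact.of_isClosed_subset isCompact_univ (isClosed_tsupport g) (subset_univ _))
  -- the dual operator
  set U : (X → ℝ) → (X → ℝ) := fun g x => ∑ i, p i * g (f i x) with hU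
  have hUcont : ∀ g : X → ℝ, Continuous g → Continuous (U g) := by
    intro g hg
    exact continuous_finset_sum _ fun i _ => continuous_const.mul (hg.comp (hfc i))
  have hUiter : ∀ (g : X → ℝ), Continuous g → ∀ n, Continuous (U^[n] g) := by
    intro g hg n
    induction n with
    | zero => exact hg
    | succ n ih => rw [Function.iterate_succ_apply']; exact hUcont _ ih
  -- invariance under the dual operator
  have hstep : ∀ (m : Measure X), IsProbabilityMeasure m →
      m = (∑ i, ENNReal.ofReal (p i) • m.map (f i)) →
      ∀ g : X → ℝ, Continuous g → ∫ x, g x ∂m = ∫ x, U g x ∂m := by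
    intro m hmp hminv g hg
    have hint_map : ∀ i : Fin N, Integrable g (m.map (f i)) := by
      intro i
      exact (integrable_map_measure hg.aestronglyMeasurable (hfm i).aemeasurable).2
        (hInt _ (hg.comp (hfc i)) m inferInstance)
    calc ∫ x, g x ∂m = ∫ x, g x ∂(∑ i, ENNReal.ofReal (p i) • m.map (f i)) := by
          rw [← hminv]
      _ = ∑ i, ∫ x, g x ∂(ENNReal.ofReal (p i) • m.map (f i)) := by
          refine integral_finset_sum_measure fun i _ => ?_
          exact (hint_map i).smul_measure ENNReal.ofReal_ne_top
      _ = ∑ i, p i * ∫ x, g (f i x) ∂m := by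
          refine Finset.sum_congr rfl fun i _ => ?_
          rw [integral_smul_measure, integral_map (hfm i).aemeasurable hg.aestronglyMeasurable,
            ENNReal.toReal_ofReal (hp i).le, smul_eq_mul]
      _ = ∫ x, ∑ i, p i * g (f i x) ∂m := by
          rw [integral_finset_sum _ (fun i _ =>
            ((hInt (fun x => g (f i x)) (hg.comp (hfc i)) m inferInstance).const_mul
              (p i) : Integrable (fun x => p i * g (f i x)) m))]
          exact Finset.sum_congr rfl fun i _ => (integral_const_mul _ _).symm
      _ = ∫ x, U g x ∂m := rfl
  have hiter : ∀ (m : Measure X), IsProbabilityMeasure m →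
      m = (∑ i, ENNReal.ofReal (p i) • m.map (f i)) →
      ∀ n, ∀ g : X → ℝ, Continuous g → ∫ x, g x ∂m = ∫ x, (U^[n] g) x ∂m := by
    intro m hmp hminv n
    induction n with
    | zero => intro g hg; rfl
    | succ n ih =>
      intro g hg
      have h1 := hstep m hmp hminv g hg
      have h2 := ih (U g) (hUcont g hg)
      simp only [Function.iterate_succ_apply]
      rw [h1]; exact h2
  -- contraction constant
  set Cr : ℝ := ((Finset.univ.sup r : ℝ≥0) : ℝ) with hCrdef
  have hCr0 : 0 ≤ Cr := (Finset.univ.sup r).2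
  have hCr1 : Cr < 1 := by
    have : Finset.univ.sup r < 1 := by
      refine Finset.sup_lt_iff (by norm_num) |>.2 fun i _ => hr i
    exact_mod_cast this
  have hcontr : ∀ (i : Fin N) (x y : X), dist (f i x) (f i y) ≤ Cr * dist x y := by
    intro i x y
    refine le_trans ((hf i).dist_le_mul x y) ?_
    have h0 : r i ≤ Finset.univ.sup r := Finset.le_sup (Finset.mem_univ i)
    have : (r i : ℝ) ≤ Cr := by exact_mod_cast h0
    exact mul_le_mul_of_nonneg_right this dist_nonneg
  -- oscillation bound
  have hosc : ∀ g : X → ℝ, Continuous g → ∀ ε : ℝ, 0 < ε →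
      ∃ n : ℕ, ∀ x y : X, dist ((U^[n] g) x) ((U^[n] g) y) ≤ ε := by
    intro g hg ε hε
    obtain ⟨δ, hδ0, hδ⟩ := Metric.uniformContinuous_iff.1
      (CompactSpace.uniformContinuous_of_continuous hg)
      ε hε
    -- diameter bound
    obtain ⟨D, hD⟩ := Metric.isBounded_iff.1 (isCompact_univ (X := X)).isBounded
    have hD' : ∀ x y : X, dist x y ≤ max D 0 := fun x y =>
      le_trans (hD (mem_univ x) (mem_univ y)) (le_max_left _ _)
    have hDnn : (0:ℝ) ≤ max D 0 := le_max_right _ _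
    -- choose n
    obtain ⟨n, hn⟩ : ∃ n : ℕ, Cr ^ n * (max D 0 + 1) < δ := by
      have h2 := tendsto_pow_atTop_nhds_zero_of_lt_one hCr0 hCr1
      have h3 : Filter.Tendsto (fun n : ℕ => Cr ^ n * (max D 0 + 1)) Filter.atTop (nhds 0) := by
        simpa using h2.mul_const (max D 0 + 1)
      have := (h3.eventually (eventually_lt_nhds hδ0)).exists
      simpa using this
    refine ⟨n, ?_⟩
    -- key induction
    have key : ∀ m : ℕ, ∀ x y : X, Cr ^ m * dist x y < δ →
        dist ((U^[m] g) x) ((U^[m] g) y) ≤ ε := by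
      intro m
      induction m with
      | zero =>
        intro x y h
        simpa using (hδ (by simpa using h)).le
      | succ m ih =>
        intro x y h
        rw [Function.iterate_succ_apply']
        have hexp : ∀ i : Fin N, Cr ^ m * dist (f i x) (f i y) < δ := by
          intro i
          refine lt_of_le_of_lt ?_ h
          calc Cr ^ m * dist (f i x) (f i y) ≤ Cr ^ m * (Cr * dist x y) := by
                exact mul_le_mul_of_nonneg_left (hcontr i x y) (pow_nonneg hCr0 m)
            _ = Cr ^ (m + 1) * dist x y := by ring
        have := fun i : Fin N => ih (f i x) (f i y) (hexp i)
        -- bound the weighted sum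
        rw [Real.dist_eq]
        have heq : U (U^[m] g) x - U (U^[m] g) y
            = ∑ i, p i * ((U^[m] g) (f i x) - (U^[m] g) (f i y)) := by
          simp only [hU, mul_sub, Finset.sum_sub_distrib]
        rw [heq]
        calc |∑ i, p i * ((U^[m] g) (f i x) - (U^[m] g) (f i y))|
            ≤ ∑ i, |p i * ((U^[m] g) (f i x) - (U^[m] g) (f i y))| :=
              Finset.abs_sum_le_sum_abs _ _
          _ ≤ ∑ i, p i * ε := by
              refine Finset.sum_le_sum fun i _ => ?_
              rw [abs_mul, abs_of_pos (hp i)]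
              refine mul_le_mul_of_nonneg_left ?_ (hp i).le
              rw [← Real.dist_eq]
              exact this i
          _ = ε := by rw [← Finset.sum_mul, hpsum, one_mul]
    intro x y
    refine key n x y (lt_of_le_of_lt ?_ hn)
    have : dist x y ≤ max D 0 + 1 := le_trans (hD' x y) (by linarith)
    exact mul_le_mul_of_nonneg_left this (pow_nonneg hCr0 n)
  -- equal integrals of continuous functions
  have hint_eq : ∀ g : X → ℝ, Continuous g → ∫ x, g x ∂μ = ∫ x, g x ∂ν := by
    intro g hg
    obtain ⟨x0⟩ : Nonempty X := inferInstance
    have habs : ∀ ε : ℝ, 0 < ε → |∫ x, g x ∂μ - ∫ x, g x ∂ν| ≤ 2 * ε := by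
      intro ε hε
      obtain ⟨n, hn⟩ := hosc g hg ε hε
      have hbound : ∀ (m : Measure X), IsProbabilityMeasure m →
          |∫ x, (U^[n] g) x ∂m - (U^[n] g) x0| ≤ ε := by
        intro m hmp
        have heq2 : ∫ x, (U^[n] g) x ∂m - (U^[n] g) x0
            = ∫ x, ((U^[n] g) x - (U^[n] g) x0) ∂m := by
          rw [integral_sub (hInt _ (hUiter g hg n) m inferInstance) (integrable_const _),
            integral_const]
          simp
        rw [heq2]
        have := norm_integral_le_of_norm_le_const (μ := m)
          (f := fun x => (U^[n] g) x - (U^[n] g) x0) (C := ε) ?_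
        · simpa using this
        · filter_upwards with x
          rw [Real.norm_eq_abs, ← Real.dist_eq]
          exact hn x x0
      have h1 := hbound μ hμp
      have h2 := hbound ν hνp
      rw [hiter μ hμp hμ n g hg, hiter ν hνp hν n g hg]
      calc |∫ x, (U^[n] g) x ∂μ - ∫ x, (U^[n] g) x ∂ν|
          ≤ |∫ x, (U^[n] g) x ∂μ - (U^[n] g) x0|
            + |∫ x, (U^[n] g) x ∂ν - (U^[n] g) x0| := by
              rw [abs_sub_comm (∫ x, (U^[n] g) x ∂ν) ((U^[n] g) x0)] at *
              exact abs_sub_le _ _ _ |>.trans (by rw [abs_sub_comm ((U^[n] g) x0)])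
        _ ≤ 2 * ε := by linarith
    by_contra hne
    have hpos : 0 < |∫ x, g x ∂μ - ∫ x, g x ∂ν| := by
      rw [abs_pos, sub_ne_zero]; exact hne
    have := habs (|∫ x, g x ∂μ - ∫ x, g x ∂ν| / 4) (by linarith)
    linarith
  -- conclude equality of measures
  refine ext_of_forall_lintegral_eq_of_IsFiniteMeasure fun F => ?_
  have hFc : Continuous fun x => ((F x : ℝ≥0) : ℝ) := NNReal.continuous_coe.comp F.continuous
  rw [lintegral_coe_eq_integral _ (hInt _ hFc μ inferInstance),
    lintegral_coe_eq_integral _ (hInt _ hFc ν inferInstance), hint_eq _ hFc]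

/-- Existence and uniqueness of the measure attractor of an IFS with weights on a
nonempty compact metric space: there is a unique Borel probability measure `μ` with
`μ = ∑ i, p i • (f i)_# μ`. -/
theorem exists_unique_measure_attractor
    {X : Type*} [MetricSpace X] [CompactSpace X] [Nonempty X]
    [MeasurableSpace X] [BorelSpace X]
    {N : ℕ} (hN : 1 ≤ N) (f : Fin N → X → X) (r : Fin N → ℝ≥0)
    (hr : ∀ i, r i < 1) (hf : ∀ i, LipschitzWith (r i) (f i))
    (p : Fin N → ℝ) (hp : ∀ i, 0 < p i) (hpsum : ∑ i, p i = 1) :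
    ∃! μ : Measure X, IsProbabilityMeasure μ ∧
      μ = ∑ i, ENNReal.ofReal (p i) • μ.map (f i) := by
  obtain ⟨μ, hμprob, hμinv⟩ := attractor_exists hN f r hr hf p hp hpsum
  exact ⟨μ, ⟨hμprob, hμinv⟩, fun ν hν =>
    attractor_unique f r hr hf p hp hpsum ν μ hν.1 hμprob hν.2 hμinv⟩
end

section
/- Let X be a nonempty compact metric space, let f_1, …, f_N : X → X be continuous contraction maps (each Lipschitz with some constant < 1), let p_1, …, p_N be positive reals summing to 1, and let μ be the measure attractor, i.e. the unique Borel probability measure with μ = Σ_i p_i (f_i)_# μ. Let (I_k)_{k ≥ 0} be independent random variables, each taking value i with probability p_i, fix any x_0 ∈ X, and define the random orbit x_{k+1} = f_{I_k}(x_k). Then with probability one the empirical measures (1/k) Σ_{j=0}^{k-1} δ_{x_j} converge weakly to μ as k → ∞. -/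
/-!
Let `T u = ∑ i, p i • u ∘ f i` be the transfer operator of the IFS. Invariance of `μ` means
`∫ T u dμ = ∫ u dμ`, and `T` multiplies Lipschitz constants by `c = ∑ i, p i * r i < 1`.
Hence for a Lipschitz `g` with `∫ g dμ = 0` the iterates satisfy `|T^n g| ≤ c^n L diam X`,
and `h = ∑ n, T^n g` solves the Poisson equation `h - T h = g`. Along the random orbit,
`∑_{j<k} g(x_j) = h(x_0) - h(x_k) + ∑_{j<k} d_j` with `d_j = h(x_{j+1}) - T h(x_j)`.
As `I_j` is independent of `x_0, …, x_j`, the `d_j` are bounded and pairwise orthogonal in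
`L²`, so `E (∑_{j<k} d_j)^2 = O(k)`. Borel–Cantelli along the squares, with the bounded
increments filling the gaps, gives `k⁻¹ ∑_{j<k} d_j → 0` almost surely. Lipschitz functions
are dense in the separable space `C(X, ℝ)` (lattice Stone–Weierstrass), so countably many of
them suffice, and the set of functions whose averages converge is closed.
-/

open MeasureTheory ProbabilityTheory NNReal ENNReal Filter
open Topology Finset

theorem tendsto_div_of_tendsto_sq_div {a : ℕ → ℝ} {C : ℝ} (hstep : ∀ k, |a (k + 1) - a k| ≤ C)
    (hsq : Tendsto (fun n : ℕ => a (n ^ 2) / (n ^ 2 : ℕ)) atTop (𝓝 0)) :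
    Tendsto (fun k : ℕ => a k / k) atTop (𝓝 0) := by
  have hC : 0 ≤ C := (abs_nonneg _).trans (hstep 0)
  have hbound : ∀ᶠ k : ℕ in atTop,
      ‖a k / k‖ ≤ |a (Nat.sqrt k ^ 2) / (Nat.sqrt k ^ 2 : ℕ)| + 2 * C / Nat.sqrt k := by
    filter_upwards [eventually_ge_atTop 1] with k hk
    set s := Nat.sqrt k
    have hs : 0 < (s : ℝ) := by exact_mod_cast Nat.sqrt_pos.2 hk
    have hsk : s ^ 2 ≤ k := Nat.sqrt_le' k
    have hks : ((k - s ^ 2 : ℕ) : ℝ) ≤ 2 * s := by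
      have h : k < (s + 1) ^ 2 := Nat.lt_succ_sqrt' k
      have hsq : (s + 1) ^ 2 = s ^ 2 + 2 * s + 1 := by ring
      exact_mod_cast (show k - s ^ 2 ≤ 2 * s by omega)
    have hgap : |a k - a (s ^ 2)| ≤ C * (2 * s) := by
      have h := dist_le_Ico_sum_of_dist_le (f := a) hsk (d := fun _ => C)
        fun _ _ => by simpa [Real.dist_eq, abs_sub_comm] using hstep _
      rw [sum_const, Nat.card_Ico, nsmul_eq_mul, Real.dist_eq, abs_sub_comm] at h
      nlinarith
    have hsk' : (s : ℝ) ^ 2 ≤ k := by exact_mod_cast hsk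
    rw [Real.norm_eq_abs, abs_div, Nat.abs_cast, Nat.cast_pow, abs_div,
      abs_of_pos (by positivity : (0 : ℝ) < s ^ 2)]
    calc |a k| / k ≤ (|a (s ^ 2)| + C * (2 * s)) / (s : ℝ) ^ 2 :=
          div_le_div₀ (by positivity) (by linarith [abs_sub_abs_le_abs_sub (a k) (a (s ^ 2))])
            (by positivity) hsk'
      _ = |a (s ^ 2)| / (s : ℝ) ^ 2 + 2 * C / s := by field_simp
  refine squeeze_zero_norm' hbound ?_
  have hsqrt : Tendsto Nat.sqrt atTop atTop :=
    tendsto_atTop_atTop.2 fun b => ⟨b ^ 2, fun k hk => Nat.le_sqrt'.2 hk⟩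
  simpa [Function.comp_def] using
    (hsq.abs.add (tendsto_const_nhds.div_atTop tendsto_natCast_atTop_atTop)).comp hsqrt

theorem tendsto_average_of_sub_eq {α : Type*} {y : ℕ → α} {g h v : α → ℝ} {c B : ℝ}
    (hB : ∀ z, ‖h z‖ ≤ B) (hgh : ∀ z, h z - v z = g z - c)
    (hmart : Tendsto (fun k : ℕ => (∑ j ∈ range k, (h (y (j + 1)) - v (y j))) / k) atTop
      (𝓝 0)) :
    Tendsto (fun k : ℕ => (1 / (k : ℝ)) * ∑ j ∈ range k, g (y j)) atTop (𝓝 c) := by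
  have hsum : ∀ k, ∑ j ∈ range k, g (y j)
      = k * c + (h (y 0) - h (y k)) + ∑ j ∈ range k, (h (y (j + 1)) - v (y j)) := fun k => by
    have hj : ∀ j, g (y j) = c + (h (y j) - h (y (j + 1))) + (h (y (j + 1)) - v (y j)) :=
      fun j => by linarith [hgh (y j)]
    simp_rw [hj, sum_add_distrib, sum_range_sub', sum_const, card_range, nsmul_eq_mul]
  have hbdry : Tendsto (fun k : ℕ => 1 / (k : ℝ) * (h (y 0) - h (y k))) atTop (𝓝 0) :=
    tendsto_one_div_atTop_nhds_zero_nat.zero_mul_isBoundedUnder_le <| isBoundedUnder_of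
      ⟨B + B, fun k => (norm_sub_le _ _).trans (add_le_add (hB _) (hB _))⟩
  have hlim := tendsto_const_nhds (x := c) |>.add (hbdry.add hmart)
  rw [add_zero, add_zero] at hlim
  refine hlim.congr' ?_
  filter_upwards [eventually_ne_atTop 0] with k hk
  rw [hsum]
  field_simp
  ring

section Orthogonal

variable {Ω : Type*} [MeasurableSpace Ω] {P : Measure Ω}

theorem ae_tendsto_zero_of_summable_integral_sq {Y : ℕ → Ω → ℝ}
    (hY : ∀ n, Integrable (fun ω => Y n ω ^ 2) P) (hsum : Summable fun n => ∫ ω, Y n ω ^ 2 ∂P) :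
    ∀ᵐ ω ∂P, Tendsto (fun n => Y n ω) atTop (𝓝 0) := by
  have hmeas : ∀ n, AEMeasurable (fun ω => ENNReal.ofReal (Y n ω ^ 2)) P :=
    fun n => (hY n).aemeasurable.ennreal_ofReal
  have hfinite : ∫⁻ ω, ∑' n, ENNReal.ofReal (Y n ω ^ 2) ∂P ≠ ∞ := by
    rw [lintegral_tsum hmeas]
    simp_rw [← ofReal_integral_eq_lintegral_ofReal (hY _) (ae_of_all _ fun ω => sq_nonneg _)]
    rw [← ENNReal.ofReal_tsum_of_nonneg (fun n => integral_nonneg fun ω => sq_nonneg _) hsum]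
    exact ofReal_ne_top
  filter_upwards [ae_lt_top' (AEMeasurable.tsum hmeas) hfinite] with ω hω
  have hsq : Summable fun n => Y n ω ^ 2 := by
    simpa [ENNReal.toReal_ofReal (sq_nonneg _)] using ENNReal.summable_toReal hω.ne
  rw [tendsto_zero_iff_abs_tendsto_zero]
  simpa [Function.comp_def, Real.sqrt_sq_eq_abs] using hsq.tendsto_atTop_zero.sqrt

theorem integral_sq_sum_eq_sum_integral_sq {d : ℕ → Ω → ℝ} (hd : ∀ j, MemLp (d j) 2 P)
    (horth : ∀ j l, j < l → ∫ ω, d j ω * d l ω ∂P = 0) (k : ℕ) :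
    ∫ ω, (∑ j ∈ range k, d j ω) ^ 2 ∂P = ∑ j ∈ range k, ∫ ω, d j ω ^ 2 ∂P := by
  induction k with
  | zero => simp
  | succ k ih =>
    have hS : MemLp (fun ω => ∑ j ∈ range k, d j ω) 2 P := by
      simpa using memLp_finsetSum (range k) fun j _ => hd j
    have hcross : ∫ ω, (∑ j ∈ range k, d j ω) * d k ω ∂P = 0 := by
      simp_rw [sum_mul]
      rw [integral_finsetSum _ fun j _ => by exact (hd j).integrable_mul (hd k)]
      exact sum_eq_zero fun j hj => horth j k (mem_range.1 hj)
    have hSd : Integrable (fun ω => (∑ j ∈ range k, d j ω) * d k ω) P :=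
      hS.integrable_mul (hd k)
    have hexpand : ∀ ω, (∑ j ∈ range (k + 1), d j ω) ^ 2
        = (∑ j ∈ range k, d j ω) ^ 2 + 2 * ((∑ j ∈ range k, d j ω) * d k ω) + d k ω ^ 2 :=
      fun ω => by rw [sum_range_succ]; ring
    simp_rw [hexpand]
    rw [integral_add, integral_add, integral_const_mul, hcross, ih, sum_range_succ]
    · ring
    exacts [hS.integrable_sq, hSd.const_mul 2, hS.integrable_sq.add (hSd.const_mul 2),
      (hd k).integrable_sq]

theorem ae_tendsto_sum_div_of_orthogonal [IsFiniteMeasure P] {d : ℕ → Ω → ℝ} {C : ℝ}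
    (hd : ∀ j, Measurable (d j)) (hC : ∀ j ω, |d j ω| ≤ C)
    (horth : ∀ j l, j < l → ∫ ω, d j ω * d l ω ∂P = 0) :
    ∀ᵐ ω ∂P, Tendsto (fun k : ℕ => (∑ j ∈ range k, d j ω) / k) atTop (𝓝 0) := by
  set S : ℕ → Ω → ℝ := fun k ω => ∑ j ∈ range k, d j ω
  have hL2 : ∀ j, MemLp (d j) 2 P := fun j =>
    .of_bound (hd j).aestronglyMeasurable C (ae_of_all _ fun ω => hC j ω)
  have hSint : ∀ k, Integrable (fun ω => S k ω ^ 2) P := fun k => by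
    simpa using (memLp_finsetSum (range k) fun j _ => hL2 j).integrable_sq
  have hmoment : ∀ k, ∫ ω, S k ω ^ 2 ∂P ≤ P.real Set.univ * C ^ 2 * k := fun k => by
    rw [integral_sq_sum_eq_sum_integral_sq hL2 horth]
    calc ∑ j ∈ range k, ∫ ω, d j ω ^ 2 ∂P ≤ ∑ j ∈ range k, ∫ _ω, C ^ 2 ∂P :=
          sum_le_sum fun j _ => integral_mono (hL2 j).integrable_sq (integrable_const _)
            fun ω => by simpa [sq_abs] using pow_le_pow_left₀ (abs_nonneg _) (hC j ω) 2
      _ = P.real Set.univ * C ^ 2 * k := by simp [mul_comm]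
  have hsq : ∀ᵐ ω ∂P, Tendsto (fun n : ℕ => S (n ^ 2) ω / (n ^ 2 : ℕ)) atTop (𝓝 0) := by
    refine ae_tendsto_zero_of_summable_integral_sq (fun n => ?_) ?_
    · simpa [div_pow] using (hSint (n ^ 2)).div_const (((n : ℝ) ^ 2) ^ 2)
    · refine Summable.of_nonneg_of_le (fun n => integral_nonneg fun ω => sq_nonneg _)
        (fun n => ?_)
        ((Real.summable_nat_pow_inv.2 one_lt_two).mul_left (P.real Set.univ * C ^ 2))
      rcases Nat.eq_zero_or_pos n with rfl | hn
      · simp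
      simp_rw [div_pow]
      rw [integral_div, div_le_iff₀ (by positivity)]
      calc ∫ ω, S (n ^ 2) ω ^ 2 ∂P ≤ P.real Set.univ * C ^ 2 * (n ^ 2 : ℕ) := hmoment _
        _ = P.real Set.univ * C ^ 2 * ((n : ℝ) ^ 2)⁻¹ * ((n ^ 2 : ℕ) : ℝ) ^ 2 := by
          push_cast; field_simp
  filter_upwards [hsq] with ω hω
  exact tendsto_div_of_tendsto_sq_div (fun k => by simpa [S, sum_range_succ] using hC k ω) hω

end Orthogonal

section CompactSpace

variable {X : Type*} [MetricSpace X] [CompactSpace X]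

theorem ContinuousMap.exists_countable_dense_lipschitzWith :
    ∃ t : Set C(X, ℝ), t.Countable ∧ Dense t ∧ ∀ u ∈ t, ∃ K, LipschitzWith K u := by
  set L := {u : C(X, ℝ) | ∃ K, LipschitzWith K u}
  have hsep : L.SeparatesPointsStrongly := fun v a b => by
    -- for `b = a` the junk value `x / 0 = 0` makes this the constant function `v a`
    refine ⟨⟨fun z => v a + (v b - v a) / dist b a * dist z a, by fun_prop⟩,
      ⟨‖(v b - v a) / dist b a‖₊, .of_dist_le_mul fun z w => ?_⟩, by simp, ?_⟩
    · simpa [Real.dist_eq, ← mul_sub, abs_mul, abs_div] using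
        mul_le_mul_of_nonneg_left (abs_dist_sub_le z w a) (abs_nonneg ((v b - v a) / dist b a))
    · rcases eq_or_ne b a with rfl | hba
      · simp
      · simp [div_mul_cancel₀ _ (dist_ne_zero.2 hba)]
  have hL : closure L = Set.univ := ContinuousMap.sublattice_closure_eq_top L
    ⟨0, 0, LipschitzWith.const 0⟩ (fun _ ⟨_, hu⟩ _ ⟨_, hv⟩ => ⟨_, hu.min hv⟩)
    (fun _ ⟨_, hu⟩ _ ⟨_, hv⟩ => ⟨_, hu.max hv⟩) hsep
  obtain ⟨t, htL, htc, hLt⟩ :=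
    (TopologicalSpace.IsSeparable.of_separableSpace L).exists_countable_dense_subset
  refine ⟨t, htc, ?_, fun u hu => htL hu⟩
  rw [dense_iff_closure_eq, Set.eq_univ_iff_forall]
  exact fun u => closure_minimal hLt isClosed_closure (hL ▸ Set.mem_univ u)

variable [MeasurableSpace X] [OpensMeasurableSpace X] {μ : Measure X}

theorem Continuous.integrable_of_compactSpace [IsFiniteMeasure μ] {u : X → ℝ}
    (hu : Continuous u) : Integrable u μ :=
  hu.integrable_of_hasCompactSupport (.of_compactSpace u)

theorem isClosed_setOf_tendsto_average [IsFiniteMeasure μ] (y : ℕ → X) :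
    IsClosed {u : C(X, ℝ) | Tendsto (fun k : ℕ => (1 / (k : ℝ)) * ∑ j ∈ range k, u (y j)) atTop
      (𝓝 (∫ z, u z ∂μ))} := by
  have haverage : ∀ k : ℕ,
      LipschitzWith 1 fun u : C(X, ℝ) => (1 / (k : ℝ)) * ∑ j ∈ range k, u (y j) :=
    fun k => .of_dist_le_mul fun u v => by
      rcases Nat.eq_zero_or_pos k with rfl | hk
      · simp
      rw [Real.dist_eq, ← mul_sub, ← sum_sub_distrib, abs_mul, abs_of_pos (by positivity),
        NNReal.coe_one, one_mul, one_div, inv_mul_le_iff₀ (by positivity)]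
      calc |∑ j ∈ range k, (u (y j) - v (y j))| ≤ ∑ j ∈ range k, dist u v :=
            (abs_sum_le_sum_abs _ _).trans (sum_le_sum fun j _ => by
              simpa [Real.dist_eq] using ContinuousMap.dist_apply_le_dist (f := u) (g := v) (y j))
        _ = k * dist u v := by simp
  have hintegral : Continuous fun u : C(X, ℝ) => ∫ z, u z ∂μ :=
    LipschitzWith.continuous (K := (μ.real Set.univ).toNNReal) <| .of_dist_le_mul fun u v => by
      rw [Real.dist_eq, ← integral_sub u.continuous.integrable_of_compactSpace
        v.continuous.integrable_of_compactSpace, Real.coe_toNNReal _ measureReal_nonneg, mul_comm]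
      exact norm_integral_le_of_norm_le_const (ae_of_all _ fun z =>
        (dist_eq_norm (u z) (v z)).symm.trans_le (ContinuousMap.dist_apply_le_dist z))
  exact (LipschitzWith.uniformEquicontinuous _ 1 haverage).equicontinuous.isClosed_setOfPred_tendsto
    hintegral

theorem abs_le_mul_diam_of_integral_eq_zero [IsProbabilityMeasure μ] {v : X → ℝ} {K : ℝ≥0}
    (hv : LipschitzWith K v) (hint : ∫ y, v y ∂μ = 0) (z : X) :
    |v z| ≤ K * Metric.diam (Set.univ : Set X) := by
  have hz : v z = ∫ y, (v z - v y) ∂μ := by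
    rw [integral_sub (integrable_const _) hv.continuous.integrable_of_compactSpace, hint]
    simp
  rw [hz, ← Real.norm_eq_abs]
  simpa only [probReal_univ, mul_one] using norm_integral_le_of_norm_le_const (μ := μ)
    (ae_of_all _ fun y => (dist_eq_norm (v z) (v y) ▸ hv.dist_le_mul z y).trans
      (mul_le_mul_of_nonneg_left
        (Metric.dist_le_diam_of_mem isCompact_univ.isBounded trivial trivial) K.coe_nonneg))

end CompactSpace

section Transfer

variable {ι X : Type*} [Fintype ι]

def ifsTransfer (p : ι → ℝ) (f : ι → X → X) (u : X → ℝ) (z : X) : ℝ :=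
  ∑ i, p i * u (f i z)

variable {p : ι → ℝ} {f : ι → X → X} {r : ι → ℝ≥0}

theorem sum_toNNReal_mul_lt_one (hp : ∀ i, 0 ≤ p i) (hpsum : ∑ i, p i = 1)
    (hr : ∀ i, r i < 1) : ∑ i, (p i).toNNReal * r i < 1 := by
  obtain ⟨i, hi⟩ : ∃ i, 0 < p i := by
    by_contra! h
    simp [fun i => le_antisymm (h i) (hp i)] at hpsum
  calc ∑ i, (p i).toNNReal * r i < ∑ i, (p i).toNNReal :=
        sum_lt_sum (fun i _ => mul_le_of_le_one_right' (hr i).le)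
          ⟨i, mem_univ _, mul_lt_of_lt_one_right (Real.toNNReal_pos.2 hi) (hr i)⟩
    _ = 1 := by rw [← Real.toNNReal_sum_of_nonneg fun i _ => hp i, hpsum, Real.toNNReal_one]

theorem sum_mul_sub_ifsTransfer (hpsum : ∑ i, p i = 1) (u : X → ℝ) (z : X) :
    ∑ i, p i * (u (f i z) - ifsTransfer p f u z) = 0 := by
  simp only [mul_sub, sum_sub_distrib, ← sum_mul, hpsum, one_mul, ifsTransfer, sub_self]

variable [MetricSpace X]

theorem continuous_ifsTransfer (hf : ∀ i, Continuous (f i)) {u : X → ℝ} (hu : Continuous u) :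
    Continuous (ifsTransfer p f u) :=
  continuous_finsetSum _ fun i _ => continuous_const.mul (hu.comp (hf i))

theorem continuous_iterate_ifsTransfer (hf : ∀ i, Continuous (f i)) {u : X → ℝ}
    (hu : Continuous u) (n : ℕ) : Continuous ((ifsTransfer p f)^[n] u) := by
  induction n with
  | zero => exact hu
  | succ n ih => rw [Function.iterate_succ_apply']; exact continuous_ifsTransfer hf ih

theorem lipschitzWith_ifsTransfer (hp : ∀ i, 0 ≤ p i)
    (hf : ∀ i, LipschitzWith (r i) (f i)) {u : X → ℝ} {K : ℝ≥0} (hu : LipschitzWith K u) :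
    LipschitzWith ((∑ i, (p i).toNNReal * r i) * K) (ifsTransfer p f u) := by
  refine LipschitzWith.of_dist_le_mul fun a b => ?_
  simp only [NNReal.coe_mul, NNReal.coe_sum, Real.coe_toNNReal _ (hp _), Real.dist_eq,
    ifsTransfer, ← sum_sub_distrib, sum_mul]
  refine (abs_sum_le_sum_abs _ _).trans (sum_le_sum fun i _ => ?_)
  rw [← mul_sub, abs_mul, abs_of_nonneg (hp i), mul_assoc, mul_assoc]
  refine mul_le_mul_of_nonneg_left ?_ (hp i)
  calc |u (f i a) - u (f i b)| ≤ K * dist (f i a) (f i b) := by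
        simpa [Real.dist_eq] using hu.dist_le_mul (f i a) (f i b)
    _ ≤ K * (r i * dist a b) := mul_le_mul_of_nonneg_left ((hf i).dist_le_mul a b) K.coe_nonneg
    _ = r i * (K * dist a b) := by ring

theorem lipschitzWith_iterate_ifsTransfer (hp : ∀ i, 0 ≤ p i)
    (hf : ∀ i, LipschitzWith (r i) (f i)) {u : X → ℝ} {K : ℝ≥0} (hu : LipschitzWith K u)
    (n : ℕ) :
    LipschitzWith ((∑ i, (p i).toNNReal * r i) ^ n * K) ((ifsTransfer p f)^[n] u) := by
  induction n with
  | zero => simpa using hu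
  | succ n ih =>
    rw [Function.iterate_succ_apply', pow_succ', mul_assoc]
    exact lipschitzWith_ifsTransfer hp hf ih

variable [CompactSpace X] [MeasurableSpace X] [BorelSpace X] {μ : Measure X}

theorem integral_ifsTransfer [IsFiniteMeasure μ] (hp : ∀ i, 0 ≤ p i) (hf : ∀ i, Continuous (f i))
    (hμ : μ = ∑ i, ENNReal.ofReal (p i) • μ.map (f i)) {u : X → ℝ} (hu : Continuous u) :
    ∫ z, ifsTransfer p f u z ∂μ = ∫ z, u z ∂μ := by
  have hmap : ∀ i, ∫ z, u z ∂(μ.map (f i)) = ∫ z, u (f i z) ∂μ := fun i =>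
    integral_map (hf i).measurable.aemeasurable hu.aestronglyMeasurable
  conv_rhs => rw [hμ]
  rw [integral_finsetSum_measure fun i _ =>
      (hu.integrable_of_compactSpace (μ := μ.map (f i))).smul_measure ofReal_ne_top]
  simp only [ifsTransfer]
  rw [integral_finsetSum _ fun i _ => by
    exact (hu.comp (hf i)).integrable_of_compactSpace.const_mul _]
  refine sum_congr rfl fun i _ => ?_
  rw [integral_smul_measure, hmap, integral_const_mul, ENNReal.toReal_ofReal (hp i), smul_eq_mul]

theorem integral_iterate_ifsTransfer [IsFiniteMeasure μ] (hp : ∀ i, 0 ≤ p i)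
    (hf : ∀ i, Continuous (f i)) (hμ : μ = ∑ i, ENNReal.ofReal (p i) • μ.map (f i))
    {u : X → ℝ} (hu : Continuous u) (n : ℕ) :
    ∫ z, (ifsTransfer p f)^[n] u z ∂μ = ∫ z, u z ∂μ := by
  induction n with
  | zero => rfl
  | succ n ih =>
    rw [Function.iterate_succ_apply', integral_ifsTransfer hp hf hμ
      (continuous_iterate_ifsTransfer hf hu n), ih]

theorem exists_continuous_sub_ifsTransfer_eq [IsProbabilityMeasure μ] (hp : ∀ i, 0 ≤ p i)
    (hf : ∀ i, LipschitzWith (r i) (f i)) (hc : ∑ i, (p i).toNNReal * r i < 1)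
    (hμ : μ = ∑ i, ENNReal.ofReal (p i) • μ.map (f i)) {u : X → ℝ} {K : ℝ≥0}
    (hu : LipschitzWith K u) (hint : ∫ z, u z ∂μ = 0) :
    ∃ h : X → ℝ, Continuous h ∧ ∀ z, h z - ifsTransfer p f h z = u z := by
  set c := ∑ i, (p i).toNNReal * r i
  set T := ifsTransfer p f
  have hbound : ∀ n z, ‖T^[n] u z‖ ≤ c ^ n * (K * Metric.diam (Set.univ : Set X)) :=
    fun n z => by
    rw [Real.norm_eq_abs, ← mul_assoc]
    refine abs_le_mul_diam_of_integral_eq_zero (μ := μ)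
      (lipschitzWith_iterate_ifsTransfer hp hf hu n) ?_ z
    rw [integral_iterate_ifsTransfer hp (fun i => (hf i).continuous) hμ hu.continuous, hint]
  have hgeom : Summable fun n => (c : ℝ) ^ n * (K * Metric.diam (Set.univ : Set X)) :=
    (summable_geometric_of_lt_one c.coe_nonneg (by exact_mod_cast hc)).mul_right _
  have hsum : ∀ z, Summable fun n => T^[n] u z := fun z =>
    .of_norm_bounded hgeom fun n => hbound n z
  refine ⟨fun z => ∑' n, T^[n] u z, continuous_tsum
    (fun n => (lipschitzWith_iterate_ifsTransfer hp hf hu n).continuous) hgeom hbound,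
    fun z => ?_⟩
  have hT : T (fun z => ∑' n, T^[n] u z) z = ∑' n, T^[n + 1] u z := by
    simp only [T, ifsTransfer, Function.iterate_succ_apply', ← _root_.tsum_mul_left]
    exact (Summable.tsum_finsetSum fun i _ => (hsum _).mul_left _).symm
  change ∑' n, T^[n] u z - _ = _
  rw [hT, (hsum z).tsum_eq_zero_add]
  simp

end Transfer

section Past

variable {ι Ω : Type*} [MeasurableSpace ι] {I : ℕ → Ω → ι}

abbrev pastMeasurableSpace (I : ℕ → Ω → ι) (l : ℕ) : MeasurableSpace Ω :=
  ⨆ j ∈ Set.Iio l, MeasurableSpace.comap (I j) inferInstance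

theorem pastMeasurableSpace_mono : Monotone (pastMeasurableSpace I) :=
  fun _ _ hkl => biSup_mono fun _ hj => lt_of_lt_of_le hj hkl

theorem comap_le_pastMeasurableSpace {j l : ℕ} (h : j < l) :
    MeasurableSpace.comap (I j) inferInstance ≤ pastMeasurableSpace I l :=
  le_iSup₂ (f := fun j (_ : j ∈ Set.Iio l) => MeasurableSpace.comap (I j) inferInstance) j h

theorem measurable_orbit_pastMeasurableSpace {X : Type*} [MeasurableSpace X] [Countable ι]
    [MeasurableSingletonClass ι] {f : ι → X → X} (hf : ∀ i, Measurable (f i)) {x : ℕ → Ω → X}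
    {x₀ : X} (hx0 : ∀ ω, x 0 ω = x₀) (hx : ∀ k ω, x (k + 1) ω = f (I k ω) (x k ω)) (l : ℕ) :
    Measurable[pastMeasurableSpace I l] (x l) := by
  induction l with
  | zero => simp [funext hx0]
  | succ l ih =>
    rw [funext (hx l)]
    exact (measurable_from_prod_countable_left (f := fun q : X × ι => f q.2 q.1) hf).comp
      ((ih.mono (pastMeasurableSpace_mono l.le_succ) le_rfl).prodMk
        ((comap_measurable (I l)).mono (comap_le_pastMeasurableSpace l.lt_succ_self) le_rfl))

variable [MeasurableSpace Ω]

theorem pastMeasurableSpace_le (hI : ∀ k, Measurable (I k)) (l : ℕ) :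
    pastMeasurableSpace I l ≤ ‹MeasurableSpace Ω› :=
  iSup₂_le fun j _ => (hI j).comap_le

variable {P : Measure Ω}

theorem indep_comap_pastMeasurableSpace (hI : ∀ k, Measurable (I k)) (hind : iIndepFun I P)
    (l : ℕ) : Indep (MeasurableSpace.comap (I l) inferInstance) (pastMeasurableSpace I l) P := by
  have h := indep_iSup_of_disjoint (fun k => (hI k).comap_le) hind.iIndep
    (S := {l}) (T := Set.Iio l) (by simp)
  rwa [_root_.iSup_singleton] at h

theorem integral_comp_eq_integral_sum_of_iIndepFun [Fintype ι] [MeasurableSingletonClass ι]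
    (hI : ∀ k, Measurable (I k)) (hind : iIndepFun I P) {l : ℕ} {p : ι → ℝ} (hp : ∀ i, 0 ≤ p i)
    (hdist : ∀ i, P {ω | I l ω = i} = ENNReal.ofReal (p i)) {Φ : ι → Ω → ℝ}
    (hΦ : ∀ i, Measurable[pastMeasurableSpace I l] (Φ i)) (hΦint : ∀ i, Integrable (Φ i) P) :
    ∫ ω, Φ (I l ω) ω ∂P = ∫ ω, ∑ i, p i * Φ i ω ∂P := by
  have hA : ∀ i, MeasurableSet[MeasurableSpace.comap (I l) inferInstance] {ω | I l ω = i} :=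
    fun i => ⟨{i}, measurableSet_singleton i, rfl⟩
  have hsplit : ∀ ω, Φ (I l ω) ω = ∑ i, {ω | I l ω = i}.indicator (Φ i) ω := fun ω => by
    rw [sum_eq_single_of_mem (I l ω) (mem_univ _) fun i _ hi =>
      Set.indicator_of_notMem (fun h => hi h.symm) _]
    exact (Set.indicator_of_mem (by exact rfl) _).symm
  have hblock : ∀ i, ∫ ω, {ω | I l ω = i}.indicator (Φ i) ω ∂P = p i * ∫ ω, Φ i ω ∂P :=
    fun i => by
    rw [integral_indicator ((hI l).comap_le _ (hA i))]
    simpa [measureReal_def, hdist, ENNReal.toReal_ofReal (hp i)] using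
      Indep.setIntegral_eq_mul (f := id) (hI l).comap_le
        (indep_of_indep_of_le_right (indep_comap_pastMeasurableSpace hI hind l) (hΦ i).comap_le)
        ((hΦ i).mono (pastMeasurableSpace_le hI l) le_rfl).aemeasurable (hA i)
        aestronglyMeasurable_id
  simp_rw [hsplit]
  rw [integral_finsetSum _ fun i _ => (hΦint i).indicator ((hI l).comap_le _ (hA i)),
    integral_finsetSum _ fun i _ => (hΦint i).const_mul (p i)]
  simp_rw [hblock, integral_const_mul]

end Past

section ChaosGame

variable {ι X Ω : Type*} [Fintype ι] [MeasurableSpace ι] [MeasurableSingletonClass ι]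
  [MetricSpace X] [CompactSpace X] [MeasurableSpace X] [BorelSpace X]
  [MeasurableSpace Ω] {P : Measure Ω} {I : ℕ → Ω → ι} {p : ι → ℝ} {f : ι → X → X}
  {x : ℕ → Ω → X} {x₀ : X}

theorem integral_mul_orbit_increment_eq_zero (hI : ∀ k, Measurable (I k))
    (hind : iIndepFun I P) (hp : ∀ i, 0 ≤ p i) (hpsum : ∑ i, p i = 1)
    (hdist : ∀ k i, P {ω | I k ω = i} = ENNReal.ofReal (p i)) (hf : ∀ i, Continuous (f i))
    (hx0 : ∀ ω, x 0 ω = x₀) (hx : ∀ k ω, x (k + 1) ω = f (I k ω) (x k ω)) {h : X → ℝ}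
    (hh : Continuous h) {l : ℕ} {G : Ω → ℝ} (hG : Measurable[pastMeasurableSpace I l] G)
    (hGint : Integrable G P) :
    ∫ ω, G ω * (h (x (l + 1) ω) - ifsTransfer p f h (x l ω)) ∂P = 0 := by
  have hxl := measurable_orbit_pastMeasurableSpace (fun i => (hf i).measurable) hx0 hx l
  have hv : ∀ i, Continuous fun z => h (f i z) - ifsTransfer p f h z := fun i =>
    (hh.comp (hf i)).sub (continuous_ifsTransfer hf hh)
  have hΦint : ∀ i,
      Integrable (fun ω => G ω * (h (f i (x l ω)) - ifsTransfer p f h (x l ω))) P := fun i => by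
    obtain ⟨C, hC⟩ := isCompact_univ.exists_bound_of_continuousOn (hv i).continuousOn
    exact hGint.mul_bdd ((hv i).measurable.comp
      (hxl.mono (pastMeasurableSpace_le hI l) le_rfl)).aestronglyMeasurable
      (ae_of_all _ fun ω => hC _ trivial)
  simp_rw [hx l]
  rw [integral_comp_eq_integral_sum_of_iIndepFun
    (Φ := fun i ω => G ω * (h (f i (x l ω)) - ifsTransfer p f h (x l ω))) hI hind hp (hdist l)
    (fun i => hG.mul ((hv i).measurable.comp hxl)) hΦint]
  simp_rw [mul_left_comm _ (G _), ← mul_sum, sum_mul_sub_ifsTransfer hpsum, mul_zero,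
    integral_zero]

theorem ae_tendsto_sum_orbit_increment_div [IsFiniteMeasure P] (hI : ∀ k, Measurable (I k))
    (hind : iIndepFun I P) (hp : ∀ i, 0 ≤ p i) (hpsum : ∑ i, p i = 1)
    (hdist : ∀ k i, P {ω | I k ω = i} = ENNReal.ofReal (p i)) (hf : ∀ i, Continuous (f i))
    (hx0 : ∀ ω, x 0 ω = x₀) (hx : ∀ k ω, x (k + 1) ω = f (I k ω) (x k ω)) {h : X → ℝ}
    (hh : Continuous h) :
    ∀ᵐ ω ∂P, Tendsto
      (fun k : ℕ => (∑ j ∈ range k, (h (x (j + 1) ω) - ifsTransfer p f h (x j ω))) / k)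
      atTop (𝓝 0) := by
  set d : ℕ → Ω → ℝ := fun j ω => h (x (j + 1) ω) - ifsTransfer p f h (x j ω)
  have hxm := measurable_orbit_pastMeasurableSpace (fun i => (hf i).measurable) hx0 hx
  have hpast : ∀ j, Measurable[pastMeasurableSpace I (j + 1)] (d j) := fun j =>
    (hh.measurable.comp (hxm (j + 1))).sub ((continuous_ifsTransfer hf hh).measurable.comp
      ((hxm j).mono (pastMeasurableSpace_mono j.le_succ) le_rfl))
  have hd : ∀ j, Measurable (d j) := fun j =>
    (hpast j).mono (pastMeasurableSpace_le hI _) le_rfl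
  obtain ⟨C, hC⟩ := (isCompact_univ (X := X × X)).exists_bound_of_continuousOn
    (f := fun q => h q.2 - ifsTransfer p f h q.1)
    ((hh.comp continuous_snd).sub ((continuous_ifsTransfer hf hh).comp continuous_fst)).continuousOn
  have hdC : ∀ j ω, ‖d j ω‖ ≤ C := fun j ω => hC (x j ω, x (j + 1) ω) trivial
  exact ae_tendsto_sum_div_of_orthogonal hd hdC fun j l hjl =>
    integral_mul_orbit_increment_eq_zero hI hind hp hpsum hdist hf hx0 hx hh
      ((hpast j).mono (pastMeasurableSpace_mono hjl) le_rfl)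
      (.of_bound (hd j).aestronglyMeasurable C (ae_of_all _ (hdC j)))

theorem ae_tendsto_average_of_lipschitzWith [IsFiniteMeasure P] {μ : Measure X}
    [IsProbabilityMeasure μ] {r : ι → ℝ≥0} (hI : ∀ k, Measurable (I k)) (hind : iIndepFun I P)
    (hp : ∀ i, 0 ≤ p i) (hpsum : ∑ i, p i = 1)
    (hdist : ∀ k i, P {ω | I k ω = i} = ENNReal.ofReal (p i))
    (hf : ∀ i, LipschitzWith (r i) (f i)) (hc : ∑ i, (p i).toNNReal * r i < 1)
    (hμ : μ = ∑ i, ENNReal.ofReal (p i) • μ.map (f i))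
    (hx0 : ∀ ω, x 0 ω = x₀) (hx : ∀ k ω, x (k + 1) ω = f (I k ω) (x k ω)) {g : X → ℝ} {K : ℝ≥0}
    (hg : LipschitzWith K g) :
    ∀ᵐ ω ∂P, Tendsto (fun k : ℕ => (1 / (k : ℝ)) * ∑ j ∈ range k, g (x j ω)) atTop
      (𝓝 (∫ z, g z ∂μ)) := by
  obtain ⟨h, hh, hpoisson⟩ := exists_continuous_sub_ifsTransfer_eq hp hf hc hμ
    (hg.sub (LipschitzWith.const (∫ z, g z ∂μ))) (by
      rw [integral_sub hg.continuous.integrable_of_compactSpace (integrable_const _)]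
      simp)
  obtain ⟨B, hB⟩ := isCompact_univ.exists_bound_of_continuousOn hh.continuousOn
  filter_upwards [ae_tendsto_sum_orbit_increment_div hI hind hp hpsum hdist
    (fun i => (hf i).continuous) hx0 hx hh] with ω hω
  exact tendsto_average_of_sub_eq (fun z => hB z trivial) hpoisson hω

end ChaosGame

theorem chaos_game_empirical_measures_converge_general
    {X : Type*} [MetricSpace X] [CompactSpace X]
    [MeasurableSpace X] [BorelSpace X]
    {N : ℕ} (f : Fin N → X → X) (r : Fin N → ℝ≥0)
    (hr : ∀ i, r i < 1) (hf : ∀ i, LipschitzWith (r i) (f i))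
    (p : Fin N → ℝ) (hp : ∀ i, 0 < p i) (hpsum : ∑ i, p i = 1)
    (μ : Measure X) [IsProbabilityMeasure μ]
    (hμ : μ = ∑ i, ENNReal.ofReal (p i) • μ.map (f i))
    {Ω : Type*} [MeasurableSpace Ω] (P : Measure Ω) [IsProbabilityMeasure P]
    (I : ℕ → Ω → Fin N) (hmeas : ∀ k, Measurable (I k))
    (hindep : iIndepFun I P)
    (hdist : ∀ k i, P {ω | I k ω = i} = ENNReal.ofReal (p i))
    (x₀ : X) (x : ℕ → Ω → X) (hx0 : ∀ ω, x 0 ω = x₀)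
    (hx : ∀ k ω, x (k + 1) ω = f (I k ω) (x k ω)) :
    ∀ᵐ ω ∂P, ∀ g : BoundedContinuousFunction X ℝ,
      Tendsto (fun k : ℕ => (1 / (k : ℝ)) * ∑ j ∈ Finset.range k, g (x j ω))
        atTop (nhds (∫ y, g y ∂μ)) := by
  have hp' : ∀ i, 0 ≤ p i := fun i => (hp i).le
  obtain ⟨t, htc, htd, htL⟩ := ContinuousMap.exists_countable_dense_lipschitzWith (X := X)
  have := htc.to_subtype
  have hae : ∀ᵐ ω ∂P, ∀ u : t,
      Tendsto (fun k : ℕ => (1 / (k : ℝ)) * ∑ j ∈ range k, u.1 (x j ω)) atTop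
        (𝓝 (∫ z, u.1 z ∂μ)) := ae_all_iff.2 fun u => by
    obtain ⟨K, hK⟩ := htL u u.2
    exact ae_tendsto_average_of_lipschitzWith hmeas hindep hp' hpsum hdist hf
      (sum_toNNReal_mul_lt_one hp' hpsum hr) hμ hx0 hx hK
  filter_upwards [hae] with ω hω g
  exact closure_minimal (fun u hu => hω ⟨u, hu⟩) (isClosed_setOf_tendsto_average (μ := μ) _)
    (htd.closure_eq ▸ Set.mem_univ g.toContinuousMap)

/-- Ergodicity of the chaos game for an IFS with weights on a nonempty compact metric
space: with probability one, the empirical measures of the random orbit converge weakly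
(i.e. integrals of every bounded continuous function converge) to the measure attractor. -/
theorem chaos_game_empirical_measures_converge
    {X : Type*} [MetricSpace X] [CompactSpace X] [Nonempty X]
    [MeasurableSpace X] [BorelSpace X]
    {N : ℕ} (hN : 1 ≤ N) (f : Fin N → X → X) (r : Fin N → ℝ≥0)
    (hr : ∀ i, r i < 1) (hf : ∀ i, LipschitzWith (r i) (f i))
    (p : Fin N → ℝ) (hp : ∀ i, 0 < p i) (hpsum : ∑ i, p i = 1)
    (μ : Measure X) [IsProbabilityMeasure μ]
    (hμ : μ = ∑ i, ENNReal.ofReal (p i) • μ.map (f i))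
    {Ω : Type*} [MeasurableSpace Ω] (P : Measure Ω) [IsProbabilityMeasure P]
    (I : ℕ → Ω → Fin N) (hmeas : ∀ k, Measurable (I k))
    (hindep : iIndepFun I P)
    (hdist : ∀ k i, P {ω | I k ω = i} = ENNReal.ofReal (p i))
    (x₀ : X) (x : ℕ → Ω → X) (hx0 : ∀ ω, x 0 ω = x₀)
    (hx : ∀ k ω, x (k + 1) ω = f (I k ω) (x k ω)) :
    ∀ᵐ ω ∂P, ∀ g : BoundedContinuousFunction X ℝ,
      Tendsto (fun k : ℕ => (1 / (k : ℝ)) * ∑ j ∈ Finset.range k, g (x j ω))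
        atTop (nhds (∫ y, g y ∂μ)) :=
  chaos_game_empirical_measures_converge_general f r hr hf p hp hpsum μ hμ P I hmeas hindep hdist x₀
    x hx0 hx
end

section
/- Fix V ≥ 1 and a sequence of V-variable construction steps with associated matrices M_1(α), M_2(α), … . Then for all reals α ≤ β and all k ≥ 1, 3^{-k(β-α)} · ‖M_1(α)⋯M_k(α)‖ ≤ ‖M_1(β)⋯M_k(β)‖ ≤ 2^{-k(β-α)} · ‖M_1(α)⋯M_k(α)‖. Consequently, if the pressure limits γ(α) = lim_k (1/k) log((1/V)‖M_1(α)⋯M_k(α)‖) exist at α and β, then γ(α) − (β−α)·log 3 ≤ γ(β) ≤ γ(α) − (β−α)·log 2; in particular γ is strictly decreasing with slope between −log 3 and −log 2. -/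
open Filter

/-- The entrywise sum-of-absolute-values "norm" of a matrix. -/
def entrySumNorm {V : ℕ} (A : Matrix (Fin V) (Fin V) ℝ) : ℝ :=
  ∑ v, ∑ w, |A v w|

/-- The matrix `M(α)` of a `V`-variable construction step: the step assigns to each buffer
`v` a contraction ratio `r v` and three buffer choices `w v 0, w v 1, w v 2`, and
`M(α) v u = (r v) ^ α * #{j : w v j = u}`. -/
noncomputable def stepMatrix {V : ℕ} (r : Fin V → ℝ) (w : Fin V → Fin 3 → Fin V) (α : ℝ) :
    Matrix (Fin V) (Fin V) ℝ :=
  fun v u => (r v) ^ α * ((Finset.univ.filter fun j => w v j = u).card : ℝ)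

namespace PressureAux

variable {V : ℕ}

lemma listProd_nonneg : ∀ (L : List (Matrix (Fin V) (Fin V) ℝ)),
    (∀ A ∈ L, ∀ v u, 0 ≤ A v u) → ∀ v u, 0 ≤ L.prod v u := by
  intro L
  induction L with
  | nil =>
    intro _ v u
    simp only [List.prod_nil, Matrix.one_apply]
    split <;> norm_num
  | cons A L ih =>
    intro h v u
    rw [List.prod_cons, Matrix.mul_apply]
    exact Finset.sum_nonneg fun m _ =>
      mul_nonneg (h A (by simp) v m) (ih (fun B hB => h B (by simp [hB])) m u)

lemma mapProd_nonneg (A : ℕ → Matrix (Fin V) (Fin V) ℝ)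
    (hA : ∀ i v u, 0 ≤ A i v u) (k : ℕ) :
    ∀ v u, 0 ≤ ((List.range k).map A).prod v u := by
  apply listProd_nonneg
  intro X hX
  simp only [List.mem_map] at hX
  obtain ⟨i, _, rfl⟩ := hX
  exact hA i

lemma listProd_le (c : ℝ) (hc : 0 ≤ c) (A B : ℕ → Matrix (Fin V) (Fin V) ℝ)
    (hA : ∀ i v u, 0 ≤ A i v u) (hB : ∀ i v u, 0 ≤ B i v u)
    (hAB : ∀ i v u, B i v u ≤ c * A i v u) :
    ∀ k v u, ((List.range k).map B).prod v u ≤ c ^ k * ((List.range k).map A).prod v u := by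
  intro k
  induction k with
  | zero => intro v u; simp
  | succ k ih =>
    intro v u
    rw [List.range_succ, List.map_append, List.prod_append, List.map_singleton,
      List.prod_singleton, List.map_append, List.prod_append, List.map_singleton,
      List.prod_singleton, Matrix.mul_apply, Matrix.mul_apply, Finset.mul_sum]
    apply Finset.sum_le_sum
    intro m _
    calc ((List.range k).map B).prod v m * B k m u
        ≤ (c ^ k * ((List.range k).map A).prod v m) * (c * A k m u) :=
          mul_le_mul (ih v m) (hAB k m u) (hB k m u)
            (mul_nonneg (pow_nonneg hc k) (mapProd_nonneg A hA k v m))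
      _ = c ^ (k + 1) * (((List.range k).map A).prod v m * A k m u) := by ring

lemma listProd_ge (c : ℝ) (hc : 0 ≤ c) (A B : ℕ → Matrix (Fin V) (Fin V) ℝ)
    (hA : ∀ i v u, 0 ≤ A i v u) (hB : ∀ i v u, 0 ≤ B i v u)
    (hAB : ∀ i v u, c * A i v u ≤ B i v u) :
    ∀ k v u, c ^ k * ((List.range k).map A).prod v u ≤ ((List.range k).map B).prod v u := by
  intro k
  induction k with
  | zero => intro v u; simp
  | succ k ih =>
    intro v u
    rw [List.range_succ, List.map_append, List.prod_append, List.map_singleton,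
      List.prod_singleton, List.map_append, List.prod_append, List.map_singleton,
      List.prod_singleton, Matrix.mul_apply, Matrix.mul_apply, Finset.mul_sum]
    apply Finset.sum_le_sum
    intro m _
    calc c ^ (k + 1) * (((List.range k).map A).prod v m * A k m u)
        = (c ^ k * ((List.range k).map A).prod v m) * (c * A k m u) := by ring
      _ ≤ ((List.range k).map B).prod v m * B k m u :=
          mul_le_mul (ih v m) (hAB k m u)
            (mul_nonneg hc (hA k m u)) (mapProd_nonneg B hB k v m)

lemma step_nonneg (r : Fin V → ℝ) (hr : ∀ v, 0 ≤ r v) (w : Fin V → Fin 3 → Fin V) (α : ℝ) :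
    ∀ v u, 0 ≤ stepMatrix r w α v u := fun v u =>
  mul_nonneg (Real.rpow_nonneg (hr v) α) (Nat.cast_nonneg _)

lemma step_le (r : Fin V → ℝ) (hr : ∀ v, r v = 1 / 2 ∨ r v = 1 / 3)
    (w : Fin V → Fin 3 → Fin V) {α β : ℝ} (hab : α ≤ β) (v u : Fin V) :
    stepMatrix r w β v u ≤ (2 : ℝ) ^ (-(β - α)) * stepMatrix r w α v u ∧
    (3 : ℝ) ^ (-(β - α)) * stepMatrix r w α v u ≤ stepMatrix r w β v u := by
  have hrpos : 0 < r v := by rcases hr v with h | h <;> rw [h] <;> norm_num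
  have hsplit : (r v) ^ β = (r v) ^ (β - α) * (r v) ^ α := by
    rw [← Real.rpow_add hrpos]; ring_nf
  have hcn : (0 : ℝ) ≤ ((Finset.univ.filter fun j => w v j = u).card : ℝ) := Nat.cast_nonneg _
  have hαn : (0 : ℝ) ≤ (r v) ^ α := Real.rpow_nonneg hrpos.le α
  have h2 : ((2 : ℝ)⁻¹) ^ (β - α) = (2 : ℝ) ^ (-(β - α)) := by
    rw [Real.rpow_neg (by norm_num), Real.inv_rpow (by norm_num)]
  have h3 : ((3 : ℝ)⁻¹) ^ (β - α) = (3 : ℝ) ^ (-(β - α)) := by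
    rw [Real.rpow_neg (by norm_num), Real.inv_rpow (by norm_num)]
  have hub : (r v) ^ (β - α) ≤ (2 : ℝ) ^ (-(β - α)) := by
    rw [← h2]
    apply Real.rpow_le_rpow hrpos.le _ (by linarith)
    rcases hr v with h | h <;> rw [h] <;> norm_num
  have hlb : (3 : ℝ) ^ (-(β - α)) ≤ (r v) ^ (β - α) := by
    rw [← h3]
    apply Real.rpow_le_rpow (by norm_num) _ (by linarith)
    rcases hr v with h | h <;> rw [h] <;> norm_num
  constructor
  · simp only [stepMatrix, hsplit]
    calc (r v) ^ (β - α) * (r v) ^ α * _ ≤ (2 : ℝ) ^ (-(β - α)) * (r v) ^ α * _ :=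
          mul_le_mul_of_nonneg_right (mul_le_mul_of_nonneg_right hub hαn) hcn
      _ = (2 : ℝ) ^ (-(β - α)) * ((r v) ^ α * _) := by ring
  · simp only [stepMatrix, hsplit]
    calc (3 : ℝ) ^ (-(β - α)) * ((r v) ^ α * _) = (3 : ℝ) ^ (-(β - α)) * (r v) ^ α * _ := by ring
      _ ≤ (r v) ^ (β - α) * (r v) ^ α * _ :=
          mul_le_mul_of_nonneg_right (mul_le_mul_of_nonneg_right hlb hαn) hcn

lemma step_rowsum (r : Fin V → ℝ) (w : Fin V → Fin 3 → Fin V) (α : ℝ) (v : Fin V) :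
    ∑ u, stepMatrix r w α v u = (r v) ^ α * 3 := by
  simp only [stepMatrix, ← Finset.mul_sum]
  congr 1
  rw [← Nat.cast_sum]
  norm_cast
  have := Finset.card_eq_sum_card_fiberwise
    (f := w v) (s := (Finset.univ : Finset (Fin 3))) (t := Finset.univ)
    (fun x _ => Finset.mem_univ _)
  simpa using this.symm

lemma prod_rowsum_pos (r : ℕ → Fin V → ℝ) (hr : ∀ i v, 0 < r i v)
    (w : ℕ → Fin V → Fin 3 → Fin V) (α : ℝ) :
    ∀ k v, 0 < ∑ u, ((List.range k).map fun i => stepMatrix (r i) (w i) α).prod v u := by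
  intro k
  induction k with
  | zero => intro v; simp [Matrix.one_apply]
  | succ k ih =>
    intro v
    rw [List.range_succ, List.map_append, List.prod_append, List.map_singleton,
      List.prod_singleton]
    have hrw : ∑ u, (((List.range k).map fun i => stepMatrix (r i) (w i) α).prod *
        stepMatrix (r k) (w k) α) v u
        = ∑ m, ((List.range k).map fun i => stepMatrix (r i) (w i) α).prod v m *
            ((r k m) ^ α * 3) := by
      simp only [Matrix.mul_apply]
      rw [Finset.sum_comm]
      exact Finset.sum_congr rfl fun m _ => by
        rw [← Finset.mul_sum, step_rowsum]
    rw [hrw]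
    have hnn : ∀ m, 0 ≤ ((List.range k).map fun i => stepMatrix (r i) (w i) α).prod v m :=
      fun m => mapProd_nonneg _ (fun i => step_nonneg (r i) (fun v => (hr i v).le) (w i) α) k v m
    obtain ⟨m, _, hm⟩ := Finset.exists_lt_of_sum_lt (f := fun _ => (0 : ℝ))
      (by simpa using ih v)
    apply Finset.sum_pos' (fun m _ => mul_nonneg (hnn m)
      (mul_nonneg (Real.rpow_nonneg (hr k m).le α) (by norm_num)))
    exact ⟨m, Finset.mem_univ m, by
      have : (0:ℝ) < (r k m) ^ α * 3 := by
        have := Real.rpow_pos_of_pos (hr k m) α; positivity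
      exact mul_pos hm this⟩

end PressureAux

/-- For a run of `V`-variable construction steps with ratios in `{1/2, 1/3}`, the norms of
the matrix products at exponents `α ≤ β` satisfy
`3^(-k(β-α)) ‖M₁(α)⋯M_k(α)‖ ≤ ‖M₁(β)⋯M_k(β)‖ ≤ 2^(-k(β-α)) ‖M₁(α)⋯M_k(α)‖`; consequently
any pressure limits satisfy `γ(α) - (β-α) log 3 ≤ γ(β) ≤ γ(α) - (β-α) log 2`, and in
particular the pressure function is strictly decreasing. -/
theorem pressure_function_monotonicity
    {V : ℕ} (hV : 1 ≤ V)
    (r : ℕ → Fin V → ℝ) (w : ℕ → Fin V → Fin 3 → Fin V)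
    (hr : ∀ i v, r i v = 1 / 2 ∨ r i v = 1 / 3) :
    (∀ α β : ℝ, α ≤ β → ∀ k : ℕ, 1 ≤ k →
      (3 : ℝ) ^ (-(k : ℝ) * (β - α)) *
          entrySumNorm ((List.range k).map fun i => stepMatrix (r i) (w i) α).prod
        ≤ entrySumNorm ((List.range k).map fun i => stepMatrix (r i) (w i) β).prod ∧
      entrySumNorm ((List.range k).map fun i => stepMatrix (r i) (w i) β).prod
        ≤ (2 : ℝ) ^ (-(k : ℝ) * (β - α)) *
            entrySumNorm ((List.range k).map fun i => stepMatrix (r i) (w i) α).prod) ∧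
    (∀ α β γα γβ : ℝ, α ≤ β →
      Tendsto (fun k : ℕ => (1 / (k : ℝ)) * Real.log ((1 / (V : ℝ)) *
          entrySumNorm ((List.range k).map fun i => stepMatrix (r i) (w i) α).prod))
        atTop (nhds γα) →
      Tendsto (fun k : ℕ => (1 / (k : ℝ)) * Real.log ((1 / (V : ℝ)) *
          entrySumNorm ((List.range k).map fun i => stepMatrix (r i) (w i) β).prod))
        atTop (nhds γβ) →
      γα - (β - α) * Real.log 3 ≤ γβ ∧ γβ ≤ γα - (β - α) * Real.log 2 ∧
        (α < β → γβ < γα)) := by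
  have hrpos : ∀ i v, 0 < r i v := fun i v => by rcases hr i v with h | h <;> rw [h] <;> norm_num
  have hstepnn : ∀ (δ : ℝ) (i : ℕ) (v u : Fin V), 0 ≤ stepMatrix (r i) (w i) δ v u :=
    fun δ i => PressureAux.step_nonneg (r i) (fun v => (hrpos i v).le) (w i) δ
  have hPnn : ∀ (δ : ℝ) (k : ℕ) (v u : Fin V),
      0 ≤ ((List.range k).map fun i => stepMatrix (r i) (w i) δ).prod v u :=
    fun δ k => PressureAux.mapProd_nonneg _ (hstepnn δ) k
  have hnorm_eq : ∀ (δ : ℝ) (k : ℕ),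
      entrySumNorm ((List.range k).map fun i => stepMatrix (r i) (w i) δ).prod
        = ∑ v, ∑ u, ((List.range k).map fun i => stepMatrix (r i) (w i) δ).prod v u := by
    intro δ k
    exact Finset.sum_congr rfl fun v _ => Finset.sum_congr rfl fun u _ =>
      abs_of_nonneg (hPnn δ k v u)
  have hnorm_pos : ∀ (δ : ℝ) (k : ℕ),
      0 < entrySumNorm ((List.range k).map fun i => stepMatrix (r i) (w i) δ).prod := by
    intro δ k
    rw [hnorm_eq]
    apply Finset.sum_pos' (fun v _ => Finset.sum_nonneg fun u _ => hPnn δ k v u)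
    exact ⟨⟨0, hV⟩, Finset.mem_univ _, PressureAux.prod_rowsum_pos r hrpos w δ k _⟩
  have main : ∀ α β : ℝ, α ≤ β → ∀ k : ℕ, 1 ≤ k →
      (3 : ℝ) ^ (-(k : ℝ) * (β - α)) *
          entrySumNorm ((List.range k).map fun i => stepMatrix (r i) (w i) α).prod
        ≤ entrySumNorm ((List.range k).map fun i => stepMatrix (r i) (w i) β).prod ∧
      entrySumNorm ((List.range k).map fun i => stepMatrix (r i) (w i) β).prod
        ≤ (2 : ℝ) ^ (-(k : ℝ) * (β - α)) *
            entrySumNorm ((List.range k).map fun i => stepMatrix (r i) (w i) α).prod := by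
    intro α β hab k hk
    have hc2 : (0 : ℝ) ≤ (2 : ℝ) ^ (-(β - α)) := (Real.rpow_pos_of_pos two_pos _).le
    have hc3 : (0 : ℝ) ≤ (3 : ℝ) ^ (-(β - α)) := (Real.rpow_pos_of_pos three_pos _).le
    have hle := PressureAux.listProd_le ((2 : ℝ) ^ (-(β - α))) hc2
      (fun i => stepMatrix (r i) (w i) α) (fun i => stepMatrix (r i) (w i) β)
      (hstepnn α) (hstepnn β)
      (fun i v u => (PressureAux.step_le (r i) (hr i) (w i) hab v u).1) k
    have hge := PressureAux.listProd_ge ((3 : ℝ) ^ (-(β - α))) hc3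
      (fun i => stepMatrix (r i) (w i) α) (fun i => stepMatrix (r i) (w i) β)
      (hstepnn α) (hstepnn β)
      (fun i v u => (PressureAux.step_le (r i) (hr i) (w i) hab v u).2) k
    have hpow2 : (2 : ℝ) ^ (-(k : ℝ) * (β - α)) = ((2 : ℝ) ^ (-(β - α))) ^ k := by
      rw [show (-(k : ℝ) * (β - α)) = (-(β - α)) * (k : ℝ) by ring,
        Real.rpow_mul (by norm_num), Real.rpow_natCast]
    have hpow3 : (3 : ℝ) ^ (-(k : ℝ) * (β - α)) = ((3 : ℝ) ^ (-(β - α))) ^ k := by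
      rw [show (-(k : ℝ) * (β - α)) = (-(β - α)) * (k : ℝ) by ring,
        Real.rpow_mul (by norm_num), Real.rpow_natCast]
    constructor
    · rw [hpow3, hnorm_eq, hnorm_eq, Finset.mul_sum]
      apply Finset.sum_le_sum
      intro v _
      rw [Finset.mul_sum]
      exact Finset.sum_le_sum fun u _ => hge v u
    · rw [hpow2, hnorm_eq, hnorm_eq, Finset.mul_sum]
      apply Finset.sum_le_sum
      intro v _
      rw [Finset.mul_sum]
      exact Finset.sum_le_sum fun u _ => hle v u
  refine ⟨main, ?_⟩
  intro α β γα γβ hab hα hβ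
  have hV' : (0 : ℝ) < V := by exact_mod_cast Nat.lt_of_lt_of_le Nat.zero_lt_one hV
  have key : ∀ k : ℕ, 1 ≤ k →
      (1 / (k : ℝ)) * Real.log ((1 / (V : ℝ)) *
          entrySumNorm ((List.range k).map fun i => stepMatrix (r i) (w i) β).prod)
        + (β - α) * Real.log 2
        ≤ (1 / (k : ℝ)) * Real.log ((1 / (V : ℝ)) *
          entrySumNorm ((List.range k).map fun i => stepMatrix (r i) (w i) α).prod) ∧
      (1 / (k : ℝ)) * Real.log ((1 / (V : ℝ)) *
          entrySumNorm ((List.range k).map fun i => stepMatrix (r i) (w i) α).prod)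
        ≤ (1 / (k : ℝ)) * Real.log ((1 / (V : ℝ)) *
          entrySumNorm ((List.range k).map fun i => stepMatrix (r i) (w i) β).prod)
          + (β - α) * Real.log 3 := by
    intro k hk
    obtain ⟨hg, hl⟩ := main α β hab k hk
    set Nα := entrySumNorm ((List.range k).map fun i => stepMatrix (r i) (w i) α).prod with hNα
    set Nβ := entrySumNorm ((List.range k).map fun i => stepMatrix (r i) (w i) β).prod with hNβ
    have hkpos : (0 : ℝ) < k := by exact_mod_cast hk
    have hk0 : (k : ℝ) ≠ 0 := ne_of_gt hkpos
    have hxα : (0 : ℝ) < (1 / (V : ℝ)) * Nα := mul_pos (by positivity) (hnorm_pos α k)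
    have hxβ : (0 : ℝ) < (1 / (V : ℝ)) * Nβ := mul_pos (by positivity) (hnorm_pos β k)
    have l1 : Real.log ((1 / (V : ℝ)) * Nβ)
        ≤ (-(k : ℝ) * (β - α)) * Real.log 2 + Real.log ((1 / (V : ℝ)) * Nα) := by
      have step : (1 / (V : ℝ)) * Nβ
          ≤ (2 : ℝ) ^ (-(k : ℝ) * (β - α)) * ((1 / (V : ℝ)) * Nα) := by
        rw [show (2 : ℝ) ^ (-(k : ℝ) * (β - α)) * ((1 / (V : ℝ)) * Nα)
            = (1 / (V : ℝ)) * ((2 : ℝ) ^ (-(k : ℝ) * (β - α)) * Nα) by ring]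
        exact mul_le_mul_of_nonneg_left hl (by positivity)
      calc Real.log ((1 / (V : ℝ)) * Nβ)
          ≤ Real.log ((2 : ℝ) ^ (-(k : ℝ) * (β - α)) * ((1 / (V : ℝ)) * Nα)) :=
            Real.log_le_log hxβ step
        _ = (-(k : ℝ) * (β - α)) * Real.log 2 + Real.log ((1 / (V : ℝ)) * Nα) := by
            rw [Real.log_mul (by positivity) (ne_of_gt hxα), Real.log_rpow two_pos]
    have l2 : (-(k : ℝ) * (β - α)) * Real.log 3 + Real.log ((1 / (V : ℝ)) * Nα)
        ≤ Real.log ((1 / (V : ℝ)) * Nβ) := by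
      have step : (3 : ℝ) ^ (-(k : ℝ) * (β - α)) * ((1 / (V : ℝ)) * Nα)
          ≤ (1 / (V : ℝ)) * Nβ := by
        rw [show (3 : ℝ) ^ (-(k : ℝ) * (β - α)) * ((1 / (V : ℝ)) * Nα)
            = (1 / (V : ℝ)) * ((3 : ℝ) ^ (-(k : ℝ) * (β - α)) * Nα) by ring]
        exact mul_le_mul_of_nonneg_left hg (by positivity)
      calc (-(k : ℝ) * (β - α)) * Real.log 3 + Real.log ((1 / (V : ℝ)) * Nα)
          = Real.log ((3 : ℝ) ^ (-(k : ℝ) * (β - α)) * ((1 / (V : ℝ)) * Nα)) := by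
            rw [Real.log_mul (by positivity) (ne_of_gt hxα), Real.log_rpow three_pos]
        _ ≤ Real.log ((1 / (V : ℝ)) * Nβ) :=
            Real.log_le_log (by positivity) step
    constructor
    · have h := mul_le_mul_of_nonneg_left l1 (le_of_lt (one_div_pos.mpr hkpos))
      have heq : (1 / (k : ℝ)) * ((-(k : ℝ) * (β - α)) * Real.log 2
            + Real.log ((1 / (V : ℝ)) * Nα))
          = -(β - α) * Real.log 2 + (1 / (k : ℝ)) * Real.log ((1 / (V : ℝ)) * Nα) := by
        field_simp
      rw [heq] at h
      linarith
    · have h := mul_le_mul_of_nonneg_left l2 (le_of_lt (one_div_pos.mpr hkpos))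
      have heq : (1 / (k : ℝ)) * ((-(k : ℝ) * (β - α)) * Real.log 3
            + Real.log ((1 / (V : ℝ)) * Nα))
          = -(β - α) * Real.log 3 + (1 / (k : ℝ)) * Real.log ((1 / (V : ℝ)) * Nα) := by
        field_simp
      rw [heq] at h
      linarith
  have t1 : Tendsto (fun k : ℕ => (1 / (k : ℝ)) * Real.log ((1 / (V : ℝ)) *
      entrySumNorm ((List.range k).map fun i => stepMatrix (r i) (w i) β).prod)
      + (β - α) * Real.log 2) atTop (nhds (γβ + (β - α) * Real.log 2)) :=
    hβ.add tendsto_const_nhds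
  have t2 : Tendsto (fun k : ℕ => (1 / (k : ℝ)) * Real.log ((1 / (V : ℝ)) *
      entrySumNorm ((List.range k).map fun i => stepMatrix (r i) (w i) β).prod)
      + (β - α) * Real.log 3) atTop (nhds (γβ + (β - α) * Real.log 3)) :=
    hβ.add tendsto_const_nhds
  have le1 : γβ + (β - α) * Real.log 2 ≤ γα :=
    le_of_tendsto_of_tendsto t1 hα (eventually_atTop.mpr ⟨1, fun k hk => (key k hk).1⟩)
  have le2 : γα ≤ γβ + (β - α) * Real.log 3 :=
    le_of_tendsto_of_tendsto hα t2 (eventually_atTop.mpr ⟨1, fun k hk => (key k hk).2⟩)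
  refine ⟨by linarith, by linarith, fun hlt => ?_⟩
  have hlog2 : 0 < Real.log 2 := Real.log_pos one_lt_two
  have : 0 < (β - α) * Real.log 2 := mul_pos (by linarith) hlog2
  linarith
end

section
/- Let d₁ = 2 log 3 / (log 2 + log 3) and let d∞ be the unique real number with (3/2)(2^{-d∞} + 3^{-d∞}) = 1. Then d₁ < d∞ < log 3 / log 2. (Thus the dimension of homogeneous random Sierpinski triangles is strictly smaller than that of standard random Sierpinski triangles, which in turn is strictly smaller than the dimension log 3/log 2 of the deterministic Sierpinski triangle.) -/
/-- Comparison of dimensions: the dimension `d₁ = 2 log 3/(log 2 + log 3)` of homogeneous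
random Sierpinski triangles is strictly smaller than the dimension `d∞` of standard random
Sierpinski triangles (the solution of `(3/2)(2^{-d} + 3^{-d}) = 1`), which in turn is
strictly smaller than the dimension `log 3 / log 2` of the deterministic Sierpinski
triangle. -/
theorem dimension_comparison
    (dinf : ℝ) (h : (3 / 2) * ((2 : ℝ) ^ (-dinf) + (3 : ℝ) ^ (-dinf)) = 1) :
    2 * Real.log 3 / (Real.log 2 + Real.log 3) < dinf ∧
      dinf < Real.log 3 / Real.log 2 := by
  set a := Real.log 2 with ha'
  set b := Real.log 3 with hb'
  have ha : 0 < a := Real.log_pos (by norm_num)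
  have hb : 0 < b := Real.log_pos (by norm_num)
  have hab : a < b := Real.log_lt_log (by norm_num) (by norm_num)
  have h2 : ∀ y : ℝ, (2:ℝ) ^ y = Real.exp (a * y) :=
    fun y => Real.rpow_def_of_pos (by norm_num) y
  have h3 : ∀ y : ℝ, (3:ℝ) ^ y = Real.exp (b * y) :=
    fun y => Real.rpow_def_of_pos (by norm_num) y
  have hexp3 : Real.exp b = 3 := Real.exp_log (by norm_num)
  constructor
  · -- first inequality
    by_contra hle
    push_neg at hle
    set d1 := 2 * b / (a + b) with hd1
    have key : (1:ℝ) < (3/2) * ((2:ℝ)^(-d1) + (3:ℝ)^(-d1)) := by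
      set x := (2:ℝ)^(-d1) with hx'
      set y := (3:ℝ)^(-d1) with hy'
      have hx : 0 < x := Real.rpow_pos_of_pos (by norm_num) _
      have hxy : x * y = 1/9 := by
        rw [hx', hy', h2, h3, ← Real.exp_add]
        have he : a * (-d1) + b * (-d1) = -(b + b) := by
          rw [hd1]; field_simp; ring
        rw [he, Real.exp_neg, Real.exp_add, hexp3]
        norm_num
      have hxne : x ≠ 1/3 := by
        rw [hx', h2]
        intro hcon
        have h13 : (1:ℝ)/3 = Real.exp (-b) := by
          rw [Real.exp_neg, hexp3]; norm_num
        rw [h13] at hcon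
        have heq : a * (-d1) = -b := Real.exp_injective hcon
        rw [hd1] at heq
        have hne : a + b ≠ 0 := by positivity
        field_simp at heq
        nlinarith
      have hne0 : 3 * x - 1 ≠ 0 := by
        intro hc; apply hxne; linarith
      have hsq : 0 < (3 * x - 1)^2 := by positivity
      nlinarith [hsq, hx, hxy]
    have m2 : (2:ℝ)^(-d1) ≤ (2:ℝ)^(-dinf) :=
      Real.rpow_le_rpow_left_iff (by norm_num : (1:ℝ) < 2) |>.mpr (by linarith)
    have m3 : (3:ℝ)^(-d1) ≤ (3:ℝ)^(-dinf) :=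
      Real.rpow_le_rpow_left_iff (by norm_num : (1:ℝ) < 3) |>.mpr (by linarith)
    linarith
  · by_contra hle
    push_neg at hle
    set t := b / a with ht
    have key : (3/2) * ((2:ℝ)^(-t) + (3:ℝ)^(-t)) < 1 := by
      have e2 : (2:ℝ)^(-t) = 1/3 := by
        rw [h2]
        have : a * (-t) = -b := by rw [ht]; field_simp
        rw [this, Real.exp_neg, hexp3]; norm_num
      have e3 : (3:ℝ)^(-t) < 1/3 := by
        rw [h3]
        have h13 : (1:ℝ)/3 = Real.exp (-b) := by
          rw [Real.exp_neg, hexp3]; norm_num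
        rw [h13]
        apply Real.exp_lt_exp.mpr
        rw [ht]
        have hlt : b < b * b / a := (lt_div_iff₀ ha).mpr (by nlinarith)
        have hring : b * -(b / a) = -(b * b / a) := by ring
        linarith
      linarith [e3, e2.le, e2.ge]
    have m2 : (2:ℝ)^(-dinf) ≤ (2:ℝ)^(-t) :=
      Real.rpow_le_rpow_left_iff (by norm_num : (1:ℝ) < 2) |>.mpr (by linarith)
    have m3 : (3:ℝ)^(-dinf) ≤ (3:ℝ)^(-t) :=
      Real.rpow_le_rpow_left_iff (by norm_num : (1:ℝ) < 3) |>.mpr (by linarith)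
    linarith
end

section
/- Let X be a metric space, let f_1, …, f_N : X → X (N ≥ 1) be maps each Lipschitz with constant ≤ r where 0 < r < 1, and let K be a nonempty compact set with K = f_1(K) ∪ … ∪ f_N(K). Then the Hausdorff dimension of K satisfies dim_H K ≤ log N / log(1/r). -/
/-!
Iterating the self-covering `K ⊆ ⋃ i, f i '' K` covers `K`, for every `n`, by the `N ^ n` images
of `K` under the compositions `f (w 0) ∘ ⋯ ∘ f (w (n - 1))`, each of diameter at most
`r ^ n * diam K`. At the exponent `s` with `N * r ^ s = 1` the `s`-dimensional sums of these
covers stay bounded by `diam K ^ s`, so `μH[s] K < ∞` and `dimH K ≤ s`.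
-/

open NNReal ENNReal MeasureTheory Filter Topology

section WordComp

variable {X : Type*} {N : ℕ} (f : Fin N → X → X)

def wordComp : ∀ n, (Fin n → Fin N) → X → X
  | 0, _ => id
  | n + 1, w => f (w 0) ∘ wordComp n (Fin.tail w)

variable {f}

theorem lipschitzWith_wordComp [PseudoEMetricSpace X] {r : ℝ≥0}
    (hf : ∀ i, LipschitzWith r (f i)) : ∀ n (w : Fin n → Fin N),
    LipschitzWith (r ^ n) (wordComp f n w)
  | 0, _ => by simpa [wordComp] using LipschitzWith.id
  | n + 1, w => by
    rw [pow_succ']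
    exact (hf (w 0)).comp (lipschitzWith_wordComp hf n _)

theorem subset_iUnion_image_wordComp {K : Set X} (hK : K ⊆ ⋃ i, f i '' K) :
    ∀ n, K ⊆ ⋃ w : Fin n → Fin N, wordComp f n w '' K
  | 0 => fun x hx => Set.mem_iUnion.2 ⟨Fin.elim0, x, hx, rfl⟩
  | n + 1 => fun x hx => by
    obtain ⟨i, y, hy, rfl⟩ := Set.mem_iUnion.1 (hK hx)
    obtain ⟨w, z, hz, rfl⟩ := Set.mem_iUnion.1 (subset_iUnion_image_wordComp hK n hy)
    exact Set.mem_iUnion.2 ⟨Fin.cons i w, z, hz, by simp [wordComp]⟩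

end WordComp

section HausdorffBound

variable {X : Type*} [EMetricSpace X] [MeasurableSpace X] [BorelSpace X] {N : ℕ}
  {f : Fin N → X → X} {r : ℝ≥0} {K : Set X}

theorem hausdorffMeasure_le_ediam_rpow_of_subset_iUnion_image (hr : r < 1)
    (hf : ∀ i, LipschitzWith r (f i)) (hK : K ⊆ ⋃ i, f i '' K) (hKb : Metric.ediam K ≠ ∞)
    {s : ℝ} (hs : 0 ≤ s) (hNrs : (N : ℝ≥0∞) * (r : ℝ≥0∞) ^ s ≤ 1) :
    μH[s] K ≤ Metric.ediam K ^ s := by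
  set D := Metric.ediam K
  have hdiam (n : ℕ) (w : Fin n → Fin N) :
      Metric.ediam (wordComp f n w '' K) ≤ (r : ℝ≥0∞) ^ n * D := by
    simpa using (lipschitzWith_wordComp hf n w).ediam_image_le K
  have hsmall : Tendsto (fun n : ℕ ↦ (r : ℝ≥0∞) ^ n * D) atTop (𝓝 0) := by
    simpa using ENNReal.Tendsto.mul_const
      (ENNReal.tendsto_pow_atTop_nhds_zero_of_lt_one (coe_lt_one_iff.2 hr)) (Or.inr hKb)
  have hsum (n : ℕ) : ∑ w : Fin n → Fin N, Metric.ediam (wordComp f n w '' K) ^ s ≤ D ^ s :=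
    calc ∑ w : Fin n → Fin N, Metric.ediam (wordComp f n w '' K) ^ s
        ≤ ∑ _w : Fin n → Fin N, ((r : ℝ≥0∞) ^ n * D) ^ s :=
          Finset.sum_le_sum fun w _ ↦ ENNReal.rpow_le_rpow (hdiam n w) hs
      _ = ((N : ℝ≥0∞) * (r : ℝ≥0∞) ^ s) ^ n * D ^ s := by
          rw [Finset.sum_const, Finset.card_univ, Fintype.card_fun, Fintype.card_fin,
            Fintype.card_fin, nsmul_eq_mul, ENNReal.mul_rpow_of_nonneg _ _ hs,
            ← ENNReal.rpow_natCast_mul, mul_comm (n : ℝ), ENNReal.rpow_mul_natCast,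
            Nat.cast_pow, mul_pow, mul_assoc]
      _ ≤ D ^ s := mul_le_of_le_one_left' (pow_le_one₀ zero_le hNrs)
  calc μH[s] K ≤ liminf (fun n : ℕ ↦ ∑ w : Fin n → Fin N,
        Metric.ediam (wordComp f n w '' K) ^ s) atTop :=
        Measure.hausdorffMeasure_le_liminf_sum s K _ hsmall (fun n w ↦ wordComp f n w '' K)
          (.of_forall hdiam) (.of_forall (subset_iUnion_image_wordComp hK))
    _ ≤ D ^ s := liminf_le_of_frequently_le (.of_forall hsum)

theorem dimH_le_of_subset_iUnion_image (hr : r < 1) (hf : ∀ i, LipschitzWith r (f i))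
    (hK : K ⊆ ⋃ i, f i '' K) (hKb : Metric.ediam K ≠ ∞) {d : ℝ≥0}
    (hNrd : (N : ℝ≥0∞) * (r : ℝ≥0∞) ^ (d : ℝ) ≤ 1) : dimH K ≤ d :=
  dimH_le_of_hausdorffMeasure_ne_top <|
    ((hausdorffMeasure_le_ediam_rpow_of_subset_iUnion_image hr hf hK hKb d.2 hNrd).trans_lt
      (ENNReal.rpow_lt_top_of_nonneg d.2 hKb)).ne

end HausdorffBound

theorem Real.mul_rpow_log_div_log_inv {a r : ℝ} (ha : 0 < a) (hr : 0 < r) (hr1 : r ≠ 1) :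
    a * r ^ (Real.log a / Real.log (1 / r)) = 1 := by
  have hlog : Real.log r ≠ 0 := Real.log_ne_zero_of_pos_of_ne_one hr hr1
  rw [Real.rpow_def_of_pos hr, one_div, Real.log_inv,
    show Real.log r * (Real.log a / -Real.log r) = -Real.log a by field_simp,
    Real.exp_neg, Real.exp_log ha, mul_inv_cancel₀ ha.ne']

theorem ifs_attractor_dimH_le_general
    {X : Type*} [MetricSpace X] {N : ℕ} (hN : 1 ≤ N)
    (f : Fin N → X → X) (r : ℝ≥0) (hr0 : 0 < r) (hr1 : r < 1)
    (hf : ∀ i, LipschitzWith r (f i))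
    (K : Set X) (hKc : IsCompact K)
    (hK : K = ⋃ i, f i '' K) :
    dimH K ≤ ENNReal.ofReal (Real.log N / Real.log (1 / (r : ℝ))) := by
  borelize X
  set s := Real.log N / Real.log (1 / (r : ℝ))
  have hs : 0 ≤ s := div_nonneg (Real.log_natCast_nonneg N)
    (Real.log_nonneg (one_le_one_div hr0 hr1.le))
  have hNrs : (N : ℝ≥0∞) * (r : ℝ≥0∞) ^ (s.toNNReal : ℝ) ≤ 1 := by
    rw [Real.coe_toNNReal _ hs, ← ENNReal.coe_rpow_of_ne_zero hr0.ne', ← ENNReal.coe_natCast,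
      ← ENNReal.coe_mul, ENNReal.coe_le_one_iff, ← NNReal.coe_le_one, NNReal.coe_mul,
      NNReal.coe_rpow, NNReal.coe_natCast]
    exact (Real.mul_rpow_log_div_log_inv (Nat.cast_pos.2 hN) hr0 (coe_lt_one.2 hr1).ne).le
  exact dimH_le_of_subset_iUnion_image hr1 hf hK.subset hKc.isBounded.ediam_ne_top hNrs

/-- Upper bound for the Hausdorff dimension of the attractor of an IFS of `N` maps, each
Lipschitz with constant at most `r` where `0 < r < 1`:
`dim_H K ≤ log N / log (1/r)`. -/
theorem ifs_attractor_dimH_le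
    {X : Type*} [MetricSpace X] {N : ℕ} (hN : 1 ≤ N)
    (f : Fin N → X → X) (r : ℝ≥0) (hr0 : 0 < r) (hr1 : r < 1)
    (hf : ∀ i, LipschitzWith r (f i))
    (K : Set X) (hKne : K.Nonempty) (hKc : IsCompact K)
    (hK : K = ⋃ i, f i '' K) :
    dimH K ≤ ENNReal.ofReal (Real.log N / Real.log (1 / (r : ℝ))) :=
  ifs_attractor_dimH_le_general hN f r hr0 hr1 hf K hKc hK
end
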